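/- arXiv:1804.08147 — 7 statements merged into one kernel-verified Lean document; each statement's English description precedes it below -/
import Mathlib

section
/- Let G be a finite simple connected graph of order at least 2. If x and y are adjacent vertices of G, then |cdim_G(x) − cdim_G(y)| ≤ 1. -/
open SimpleGraph

variable {V : Type*}

/-- `S` is a resolving set of `G`. -/
def IsResolving (G : SimpleGraph V) (S : Set V) : Prop :=
  ∀ x y : V, x ≠ y → ∃ z ∈ S, G.dist z x ≠ G.dist z y

/-- `S` is a connected resolving set of `G`. -/
def IsConnResolving (G : SimpleGraph V) (S : Set V) : Prop :=
  IsResolving G S ∧ (G.induce S).Connected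

/-- The metric dimension of `G`. -/
noncomputable def metricDim (G : SimpleGraph V) : ℕ :=
  sInf {n | ∃ S : Set V, IsResolving G S ∧ S.ncard = n}

/-- The connected metric dimension of `G`. -/
noncomputable def cdim (G : SimpleGraph V) : ℕ :=
  sInf {n | ∃ S : Set V, IsConnResolving G S ∧ S.ncard = n}

/-- The connected metric dimension of `G` at a vertex `v`. -/
noncomputable def cdimAt (G : SimpleGraph V) (v : V) : ℕ :=
  sInf {n | ∃ S : Set V, IsConnResolving G S ∧ v ∈ S ∧ S.ncard = n}

/-! Adding a neighbour `x` of some `y ∈ S` to a connected resolving set `S` keeps it connected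
and resolving, and costs at most one vertex; hence `cdim_G(x) ≤ cdim_G(y) + 1`, and by symmetry
the two values differ by at most one. -/

namespace SimpleGraph

variable {G : SimpleGraph V}

theorem IsResolving.mono {S T : Set V} (hS : IsResolving G S) (hST : S ⊆ T) :
    IsResolving G T := fun a b hab ↦
  let ⟨z, hz, hd⟩ := hS a b hab
  ⟨z, hST hz, hd⟩

theorem Connected.isResolving_univ (hG : G.Connected) : IsResolving G Set.univ :=
  fun a b hab ↦ ⟨a, Set.mem_univ a, by
    rw [dist_self]
    exact fun h ↦ hab (hG.dist_eq_zero_iff.mp h.symm)⟩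

theorem Connected.isConnResolving_univ (hG : G.Connected) : IsConnResolving G Set.univ :=
  ⟨hG.isResolving_univ, G.induceUnivIso.connected_iff.mpr hG⟩

theorem IsConnResolving.insert_of_adj {S : Set V} {x y : V} (hS : IsConnResolving G S)
    (hy : y ∈ S) (hxy : G.Adj x y) : IsConnResolving G (insert x S) := by
  refine ⟨hS.1.mono (Set.subset_insert x S), ?_⟩
  have hx : (G.induce {x}).Preconnected := by
    rw [induce_singleton_eq_top]
    exact fun ⟨_, rfl⟩ ⟨_, rfl⟩ ↦ Reachable.refl _
  rw [← Set.singleton_union]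
  exact connected_induce_union hx hS.2.preconnected rfl hy hxy

theorem cdimAt_le_ncard {S : Set V} {v : V} (hS : IsConnResolving G S) (hv : v ∈ S) :
    cdimAt G v ≤ S.ncard :=
  Nat.sInf_le ⟨S, hS, hv, rfl⟩

theorem Connected.exists_isConnResolving_ncard_eq_cdimAt (hG : G.Connected) (v : V) :
    ∃ S, IsConnResolving G S ∧ v ∈ S ∧ S.ncard = cdimAt G v :=
  Nat.sInf_mem (s := {n | ∃ S : Set V, IsConnResolving G S ∧ v ∈ S ∧ S.ncard = n})
    ⟨_, Set.univ, hG.isConnResolving_univ, Set.mem_univ v, rfl⟩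

theorem Connected.cdimAt_le_cdimAt_add_one_of_adj (hG : G.Connected) {x y : V}
    (hxy : G.Adj x y) : cdimAt G x ≤ cdimAt G y + 1 := by
  obtain ⟨S, hS, hyS, hcard⟩ := hG.exists_isConnResolving_ncard_eq_cdimAt y
  calc cdimAt G x ≤ (insert x S).ncard := cdimAt_le_ncard (hS.insert_of_adj hyS hxy) (.inl rfl)
    _ ≤ S.ncard + 1 := Set.ncard_insert_le x S
    _ = cdimAt G y + 1 := by rw [hcard]

end SimpleGraph

theorem stmt_3_general {V : Type*} (G : SimpleGraph V) (hG : G.Connected)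
    (x y : V) (hxy : G.Adj x y) :
    |(cdimAt G x : ℤ) - (cdimAt G y : ℤ)| ≤ 1 := by
  have hxy' := hG.cdimAt_le_cdimAt_add_one_of_adj hxy
  have hyx := hG.cdimAt_le_cdimAt_add_one_of_adj hxy.symm
  rw [abs_le]
  omega

/-- In a finite simple connected graph of order at least 2, adjacent
vertices `x, y` satisfy `|cdim_G(x) - cdim_G(y)| ≤ 1`. -/
theorem stmt_3 {V : Type*} [Fintype V] (G : SimpleGraph V) (hG : G.Connected)
    (hn : 2 ≤ Fintype.card V) (x y : V) (hxy : G.Adj x y) :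
    |(cdimAt G x : ℤ) - (cdimAt G y : ℤ)| ≤ 1 :=
  stmt_3_general G hG x y hxy
end

section
/- For every positive integer b, there exists a finite simple connected graph G such that rdiam(G) − rrad(G) = b. -/
open SimpleGraph

variable {V : Type*}

/-- The resolving radius of `G`: the minimum of `cdim_G(v)` over all vertices `v`. -/
noncomputable def rrad (G : SimpleGraph V) : ℕ :=
  sInf {n | ∃ v : V, cdimAt G v = n}

/-- The resolving diameter of `G`: the maximum of `cdim_G(v)` over all vertices `v`. -/
noncomputable def rdiam (G : SimpleGraph V) : ℕ :=
  sSup {n | ∃ v : V, cdimAt G v = n}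


/-!
The graph is the spider with legs of lengths `1, 1, n + 2`: a path `x = 0 — 1 — ⋯ — (n + 3)`
with a second leaf `y` attached to `1`. The leaves `x` and `y` are twins, so every resolving set
contains one of them; that leaf lies at distance `j` from the path vertex `j ≥ 1`, and a connected
set containing two vertices at distance `d` has more than `d` elements. Hence `cdim(j) ≥ j + 1`,
with equality for `j ≥ 2` witnessed by the initial segment `{0, …, j}`, and every connected
resolving set has at least three elements. So `rrad = 3`, attained at `2`, and `rdiam = n + 4`,
attained at `n + 3`.
-/

namespace SimpleGraph

variable {V : Type*} {G : SimpleGraph V}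

theorem exists_walk_length_eq_of_descent (f : V → V → ℕ) (eq_of_zero : ∀ u v, f u v = 0 → u = v)
    (descent : ∀ u v k, f u v = k + 1 → ∃ w, G.Adj u w ∧ f w v = k) (u v : V) :
    ∃ p : G.Walk u v, p.length = f u v := by
  induction h : f u v generalizing u with
  | zero => exact eq_of_zero u v h ▸ ⟨.nil, rfl⟩
  | succ k ih =>
    obtain ⟨w, huw, hw⟩ := descent u v k h
    obtain ⟨p, hp⟩ := ih w hw
    exact ⟨.cons huw p, by rw [Walk.length_cons, hp]⟩

theorem le_length_of_lipschitz (f : V → V → ℕ) (self : ∀ v, f v v = 0)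
    (lipschitz : ∀ u w v, G.Adj u w → f u v ≤ f w v + 1) {u v : V} (p : G.Walk u v) :
    f u v ≤ p.length := by
  induction p with
  | nil => simp [self]
  | cons h p ih => exact (lipschitz _ _ _ h).trans (by rw [Walk.length_cons]; omega)

theorem dist_eq_of_descent (f : V → V → ℕ) (self : ∀ v, f v v = 0)
    (eq_of_zero : ∀ u v, f u v = 0 → u = v)
    (lipschitz : ∀ u w v, G.Adj u w → f u v ≤ f w v + 1)
    (descent : ∀ u v k, f u v = k + 1 → ∃ w, G.Adj u w ∧ f w v = k) (u v : V) :
    G.dist u v = f u v := by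
  obtain ⟨p, hp⟩ := exists_walk_length_eq_of_descent f eq_of_zero descent u v
  obtain ⟨q, hq⟩ := Reachable.exists_walk_length_eq_dist ⟨p⟩
  exact le_antisymm (hp ▸ dist_le p) (hq ▸ le_length_of_lipschitz f self lipschitz q)

theorem induce_connected_of_descent {S : Set V} {r : V} (hr : r ∈ S) (φ : V → ℕ)
    (descent : ∀ u ∈ S, u ≠ r → ∃ w ∈ S, G.Adj u w ∧ φ w < φ u) :
    (G.induce S).Connected := by
  have reach (u : S) : (G.induce S).Reachable u ⟨r, hr⟩ := by
    induction h : φ u using Nat.strong_induction_on generalizing u with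
    | _ k ih =>
      by_cases hu : u.1 = r
      · exact (Subtype.ext hu : u = ⟨r, hr⟩) ▸ .rfl
      obtain ⟨w, hwS, huw, hw⟩ := descent u u.2 hu
      exact (Adj.reachable (G := G.induce S) (v := ⟨w, hwS⟩) huw).trans (ih _ (h ▸ hw) _ rfl)
  exact (connected_iff_exists_forall_reachable _).2 ⟨⟨r, hr⟩, fun u => (reach u).symm⟩

theorem dist_lt_ncard [Finite V] {S : Set V} (hS : (G.induce S).Preconnected) {u v : V}
    (hu : u ∈ S) (hv : v ∈ S) : G.dist u v < S.ncard := by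
  classical
  have := Fintype.ofFinite S
  obtain ⟨p⟩ := hS ⟨u, hu⟩ ⟨v, hv⟩
  calc G.dist u v ≤ (p.bypass.map (Embedding.induce S).toHom).length := dist_le _
    _ = p.bypass.length := Walk.length_map _ _
    _ < Fintype.card S := p.bypass_isPath.length_lt
    _ = S.ncard := by rw [← Nat.card_coe_set_eq, Nat.card_eq_fintype_card]

end SimpleGraph

section Resolving

variable {V : Type*} {G : SimpleGraph V}

theorem IsResolving.mem_or_mem_of_twins {S : Set V} (hS : IsResolving G S) {x y : V}
    (hxy : x ≠ y) (twins : ∀ z, z ≠ x → z ≠ y → G.dist z x = G.dist z y) : x ∈ S ∨ y ∈ S := by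
  obtain ⟨z, hz, hzxy⟩ := hS x y hxy
  by_contra! h
  exact hzxy (twins z (fun hzx => h.1 (hzx ▸ hz)) (fun hzy => h.2 (hzy ▸ hz)))

theorem isConnResolving_univ (hG : G.Connected) : IsConnResolving G Set.univ := by
  refine ⟨fun x y hxy => ⟨x, trivial, ?_⟩, (induceUnivIso G).connected_iff.2 hG⟩
  rw [dist_self]
  exact fun h => hxy ((hG.dist_eq_zero_iff).1 h.symm)

theorem cdimAt_le {S : Set V} (hS : IsConnResolving G S) {v : V} (hv : v ∈ S) :
    cdimAt G v ≤ S.ncard :=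
  Nat.sInf_le ⟨S, hS, hv, rfl⟩

theorem le_cdimAt (hG : G.Connected) {v : V} {k : ℕ}
    (h : ∀ S, IsConnResolving G S → v ∈ S → k ≤ S.ncard) : k ≤ cdimAt G v :=
  le_csInf ⟨_, _, isConnResolving_univ hG, trivial, rfl⟩ fun _ ⟨S, hS, hv, hk⟩ => hk ▸ h S hS hv

theorem rrad_eq_of_forall_le {k : ℕ} (h : ∀ v, k ≤ cdimAt G v) {v : V} (hv : cdimAt G v = k) :
    rrad G = k :=
  le_antisymm (Nat.sInf_le ⟨v, hv⟩) (le_csInf ⟨k, v, hv⟩ fun _ ⟨u, hu⟩ => hu ▸ h u)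

theorem rdiam_eq_of_forall_le {k : ℕ} (h : ∀ v, cdimAt G v ≤ k) {v : V} (hv : cdimAt G v = k) :
    rdiam G = k :=
  le_antisymm (csSup_le ⟨k, v, hv⟩ fun _ ⟨u, hu⟩ => hu ▸ h u)
    (le_csSup ⟨k, fun _ ⟨u, hu⟩ => hu ▸ h u⟩ ⟨v, hv⟩)

end Resolving

namespace Spider

abbrev Vert (n : ℕ) := Fin (n + 4) ⊕ Unit

def graph (n : ℕ) : SimpleGraph (Vert n) where
  Adj
    | .inl i, .inl j => i.val + 1 = j.val ∨ j.val + 1 = i.val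
    | .inl i, .inr _ => i.val = 1
    | .inr _, .inl j => j.val = 1
    | .inr _, .inr _ => False
  symm := ⟨by rintro (i | _) (j | _) h <;> grind⟩
  loopless := ⟨by rintro (i | _) h <;> simp_all⟩

variable {n : ℕ}

def dist' : Vert n → Vert n → ℕ
  | .inl i, .inl j => Nat.dist i j
  | .inl i, .inr _ => Nat.dist i 1 + 1
  | .inr _, .inl j => Nat.dist 1 j + 1
  | .inr _, .inr _ => 0

def vx : Vert n := .inl ⟨0, by omega⟩
def vc : Vert n := .inl ⟨1, by omega⟩
def vp : Vert n := .inl ⟨2, by omega⟩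
def vy : Vert n := .inr ()

theorem dist'_self (v : Vert n) : dist' v v = 0 := by
  rcases v with i | ⟨⟩ <;> simp [dist']

theorem eq_of_dist'_eq_zero (u v : Vert n) (h : dist' u v = 0) : u = v := by
  rcases u with i | ⟨⟩ <;> rcases v with j | ⟨⟩ <;> simp [dist', Nat.dist] at h ⊢
  omega

theorem dist'_le_of_adj (u w v : Vert n) (h : (graph n).Adj u w) : dist' u v ≤ dist' w v + 1 := by
  rcases u with i | ⟨⟩ <;> rcases w with j | ⟨⟩ <;> rcases v with k | ⟨⟩ <;>
    simp [graph, dist', Nat.dist] at h ⊢ <;> omega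

theorem dist'_descent (u v : Vert n) (k : ℕ) (h : dist' u v = k + 1) :
    ∃ w, (graph n).Adj u w ∧ dist' w v = k := by
  rcases u with i | ⟨⟩ <;> rcases v with j | ⟨⟩ <;> simp only [dist', Nat.dist] at h
  · rcases lt_or_ge i.val j.val with hij | hji
    · exact ⟨.inl ⟨i + 1, by omega⟩, Or.inl rfl, by simp [dist', Nat.dist]; omega⟩
    · exact ⟨.inl ⟨i - 1, by omega⟩, Or.inr (by simp; omega), by simp [dist', Nat.dist]; omega⟩
  · rcases Nat.lt_or_ge i.val 2 with hi | hi
    · by_cases hi0 : i.val = 0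
      · exact ⟨vc, Or.inl (by simp [hi0]), by simp [dist', vc, Nat.dist]; omega⟩
      · exact ⟨vy, by simp [graph, vy]; omega, by simp [dist', vy]; omega⟩
    · exact ⟨.inl ⟨i - 1, by omega⟩, Or.inr (by simp; omega), by simp [dist', Nat.dist]; omega⟩
  · exact ⟨vc, by simp [graph, vc], by simp [dist', vc, Nat.dist]; omega⟩
  · omega

theorem dist_eq (u v : Vert n) : (graph n).dist u v = dist' u v :=
  dist_eq_of_descent dist' dist'_self eq_of_dist'_eq_zero dist'_le_of_adj dist'_descent u v

theorem connected : (graph n).Connected :=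
  (connected_iff_exists_forall_reachable _).2 ⟨vx, fun v =>
    let ⟨p, _⟩ := exists_walk_length_eq_of_descent dist' eq_of_dist'_eq_zero dist'_descent vx v; ⟨p⟩⟩

theorem dist'_twins (z : Vert n) (hx : z ≠ vx) (hy : z ≠ vy) : dist' z vx = dist' z vy := by
  rcases z with i | ⟨⟩
  · have : i.val ≠ 0 := fun h => hx (congrArg Sum.inl (Fin.ext h))
    simp [dist', vx, vy, Nat.dist]
    omega
  · exact absurd rfl hy

theorem vx_mem_or_vy_mem {S : Set (Vert n)} (hS : IsResolving (graph n) S) : vx ∈ S ∨ vy ∈ S :=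
  hS.mem_or_mem_of_twins (by simp [vx, vy]) fun z hx hy => by
    rw [dist_eq, dist_eq, dist'_twins z hx hy]

theorem isResolving_of_vx_mem_of_vp_mem {S : Set (Vert n)} (hx : vx ∈ S) (hp : vp ∈ S) :
    IsResolving (graph n) S := by
  intro u v huv
  by_cases h : dist' vx u = dist' vx v
  · refine ⟨vp, hp, ?_⟩
    rw [dist_eq, dist_eq]
    rcases u with i | ⟨⟩ <;> rcases v with j | ⟨⟩
    · have : i ≠ j := fun hij => huv (congrArg Sum.inl hij)
      simp [dist', vx, vp, Nat.dist] at h this ⊢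
      omega
    · simp [dist', vx, vp, Nat.dist] at h ⊢
      omega
    · simp [dist', vx, vp, Nat.dist] at h ⊢
      omega
    · exact absurd rfl huv
  · exact ⟨vx, hx, by rwa [dist_eq, dist_eq]⟩

theorem succ_le_ncard {S : Set (Vert n)} (hS : IsConnResolving (graph n) S) {i : Fin (n + 4)}
    (hi : .inl i ∈ S) (hi1 : 1 ≤ i.val) : i.val + 1 ≤ S.ncard := by
  rcases vx_mem_or_vy_mem hS.1 with hx | hy
  · have := dist_lt_ncard hS.2.preconnected hx hi
    simp [dist_eq, dist', vx, Nat.dist] at this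
    omega
  · have := dist_lt_ncard hS.2.preconnected hy hi
    simp [dist_eq, dist', vy, Nat.dist] at this
    omega

theorem two_le_dist'_vx {w : Vert n} (h : dist' w vy ≠ dist' w vp) : 2 ≤ dist' vx w := by
  rcases w with i | ⟨⟩ <;> simp [dist', vx, vy, vp, Nat.dist] at h ⊢
  omega

theorem two_le_dist'_vy {w : Vert n} (h : dist' w vx ≠ dist' w vp) : 2 ≤ dist' vy w := by
  rcases w with i | ⟨⟩ <;> simp [dist', vx, vy, vp, Nat.dist] at h ⊢
  omega

theorem three_le_ncard {S : Set (Vert n)} (hS : IsConnResolving (graph n) S) : 3 ≤ S.ncard := by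
  -- `S` must separate the other leaf from `vp`, which no vertex within distance 1 of the leaf does.
  rcases vx_mem_or_vy_mem hS.1 with hx | hy
  · obtain ⟨w, hw, hyp⟩ := hS.1 vy vp (by simp [vy, vp])
    have := dist_lt_ncard hS.2.preconnected hx hw
    rw [dist_eq, dist_eq] at hyp
    linarith [dist_eq vx w, two_le_dist'_vx hyp]
  · obtain ⟨w, hw, hxp⟩ := hS.1 vx vp (by simp [vx, vp])
    have := dist_lt_ncard hS.2.preconnected hy hw
    rw [dist_eq, dist_eq] at hxp
    linarith [dist_eq vy w, two_le_dist'_vy hxp]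

def segment (i : Fin (n + 4)) : Set (Vert n) := Sum.inl '' Set.Iic i

theorem inl_mem_segment {i j : Fin (n + 4)} : (.inl j : Vert n) ∈ segment i ↔ j ≤ i :=
  Sum.inl_injective.mem_set_image

theorem ncard_segment (i : Fin (n + 4)) : (segment i).ncard = i.val + 1 := by
  rw [segment, Set.ncard_image_of_injective _ Sum.inl_injective, Set.ncard_eq_toFinset_card',
    Set.toFinset_Iic, Fin.card_Iic]

theorem vx_mem_segment (i : Fin (n + 4)) : vx ∈ segment i :=
  inl_mem_segment.2 (Nat.zero_le _)

theorem connected_segment (i : Fin (n + 4)) : ((graph n).induce (segment i)).Connected := by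
  refine induce_connected_of_descent (vx_mem_segment i) (dist' vx) ?_
  rintro _ ⟨j, hj, rfl⟩ hj0
  have hj0 : j.val ≠ 0 := fun h => hj0 (congrArg Sum.inl (Fin.ext h))
  refine ⟨.inl ⟨j - 1, by omega⟩, inl_mem_segment.2 (le_trans ?_ hj), Or.inr ?_, ?_⟩
  · simp [Fin.le_def]
  · simp; omega
  · simp only [dist', vx, Nat.dist]
    omega

theorem connected_insert_vy_segment {i : Fin (n + 4)} (hi : 1 ≤ i.val) :
    ((graph n).induce (insert vy (segment i))).Connected := by
  rw [Set.insert_eq]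
  exact connected_induce_union .of_subsingleton (connected_segment i).preconnected rfl
    (inl_mem_segment.2 hi : vc ∈ segment i) rfl

theorem isConnResolving_segment {i : Fin (n + 4)} (hi : 2 ≤ i.val) :
    IsConnResolving (graph n) (segment i) :=
  ⟨isResolving_of_vx_mem_of_vp_mem (vx_mem_segment i) (inl_mem_segment.2 hi), connected_segment i⟩

theorem cdimAt_inl {i : Fin (n + 4)} (hi : 2 ≤ i.val) : cdimAt (graph n) (.inl i) = i.val + 1 :=
  le_antisymm
    ((cdimAt_le (isConnResolving_segment hi) (inl_mem_segment.2 le_rfl)).trans_eq (ncard_segment i))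
    (le_cdimAt connected fun _ hS hi' => succ_le_ncard hS hi' (by omega))

theorem three_le_cdimAt (v : Vert n) : 3 ≤ cdimAt (graph n) v :=
  le_cdimAt connected fun _ hS _ => three_le_ncard hS

theorem cdimAt_le_add_four (v : Vert n) : cdimAt (graph n) v ≤ n + 4 := by
  rcases v with i | ⟨⟩
  · calc cdimAt (graph n) (.inl i) ≤ (segment (Fin.last (n + 3))).ncard :=
          cdimAt_le (isConnResolving_segment (by simp)) (inl_mem_segment.2 (Fin.le_last i))
      _ = n + 4 := ncard_segment _
  · let p : Fin (n + 4) := ⟨2, by omega⟩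
    have hS : IsConnResolving (graph n) (insert vy (segment p)) :=
      ⟨isResolving_of_vx_mem_of_vp_mem (.inr (vx_mem_segment p)) (.inr (inl_mem_segment.2 le_rfl)),
        connected_insert_vy_segment (by simp [p])⟩
    calc cdimAt (graph n) vy ≤ (insert vy (segment p)).ncard := cdimAt_le hS (.inl rfl)
      _ = 4 := by rw [Set.ncard_insert_of_notMem (by simp [segment, vy]), ncard_segment]
      _ ≤ n + 4 := by omega

theorem rrad_eq : rrad (graph n) = 3 :=
  rrad_eq_of_forall_le three_le_cdimAt (cdimAt_inl (i := ⟨2, by omega⟩) le_rfl)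

theorem rdiam_eq : rdiam (graph n) = n + 4 :=
  rdiam_eq_of_forall_le cdimAt_le_add_four (cdimAt_inl (i := Fin.last (n + 3)) (by simp))

end Spider

/-- For every positive integer `b`, there is a finite simple connected
graph `G` with `rdiam(G) - rrad(G) = b`. -/
theorem stmt_7 (b : ℕ) (hb : 0 < b) :
    ∃ (V : Type) (_ : Fintype V) (G : SimpleGraph V), G.Connected ∧
      rdiam G = rrad G + b := by
  obtain ⟨n, rfl⟩ : ∃ n, b = n + 1 := ⟨b - 1, by omega⟩
  exact ⟨Spider.Vert n, inferInstance, Spider.graph n, Spider.connected,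
    by rw [Spider.rdiam_eq, Spider.rrad_eq]; omega⟩
end

section
/- Let G be a finite simple connected graph of order n ≥ 2 and let v be a vertex of G. Then cdim_G(v) = 1 if and only if G is isomorphic to the path P_n on n vertices and v is an end vertex (a vertex of degree one) of G. -/
/-! Since `{v}` is connected and every set containing `v` has at least one element,
`cdim_G(v) = 1` means that `{v}` resolves `G`, i.e. that `x ↦ d(v, x)` is injective.
In a connected graph on `n` vertices these distances lie in `{0, …, n - 1}`, so an injective
distance map is a bijection onto `Fin n`; it is an isomorphism onto `P_n` because every vertex
at distance `k + 1` from `v` has a neighbour at distance `k`, and it sends `v` to the end `0`.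
Conversely, distances in `P_n` are `|i - j|`, which is injective in `j` when `i` is an end. -/

open SimpleGraph

variable {V : Type*}

namespace SimpleGraph

variable {W : Type*} {G : SimpleGraph V} {G' : SimpleGraph W}

theorem Hom.dist_le (f : G →g G') {u v : V} (h : G.Reachable u v) :
    G'.dist (f u) (f v) ≤ G.dist u v := by
  obtain ⟨p, hp⟩ := h.exists_walk_length_eq_dist
  simpa [hp] using SimpleGraph.dist_le (p.map f)

theorem Iso.dist_eq (e : G ≃g G') (u v : V) : G'.dist (e u) (e v) = G.dist u v := by
  by_cases h : G.Reachable u v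
  · refine le_antisymm (e.toHom.dist_le h) ?_
    simpa using e.symm.toHom.dist_le ((Iso.reachable_iff (φ := e)).mpr h)
  · rw [dist_eq_zero_of_not_reachable h,
      dist_eq_zero_of_not_reachable (mt Iso.reachable_iff.mp h)]

theorem Iso.ncard_neighborSet (e : G ≃g G') (v : V) :
    (G'.neighborSet (e v)).ncard = (G.neighborSet v).ncard := by
  have : G'.neighborSet (e v) = e '' G.neighborSet v := by
    ext w
    obtain ⟨w, rfl⟩ := e.surjective w
    rw [e.apply_mem_neighborSet_iff, e.injective.mem_set_image]
  rw [this, Set.ncard_image_of_injective _ e.injective]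

theorem Connected.dist_lt_card [Fintype V] (hG : G.Connected) (u v : V) :
    G.dist u v < Fintype.card V := by
  obtain ⟨p, hp, hlen⟩ := hG.exists_path_of_dist u v
  exact hlen ▸ hp.length_lt

theorem Walk.natDist_le_length (f : V → ℕ) (hf : ∀ x y, G.Adj x y → Nat.dist (f x) (f y) ≤ 1)
    {x y : V} (p : G.Walk x y) : Nat.dist (f x) (f y) ≤ p.length := by
  induction p with
  | nil => simp
  | @cons x z y h p ih =>
    calc Nat.dist (f x) (f y) ≤ Nat.dist (f x) (f z) + Nat.dist (f z) (f y) :=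
          Nat.dist.triangle_inequality _ _ _
      _ ≤ 1 + p.length := Nat.add_le_add (hf x z h) ih
      _ = (Walk.cons h p).length := by rw [Walk.length_cons, Nat.add_comm]

theorem Reachable.natDist_le_dist (f : V → ℕ)
    (hf : ∀ x y, G.Adj x y → Nat.dist (f x) (f y) ≤ 1) {x y : V} (h : G.Reachable x y) :
    Nat.dist (f x) (f y) ≤ G.dist x y := by
  obtain ⟨p, hp⟩ := h.exists_walk_length_eq_dist
  exact hp ▸ p.natDist_le_length f hf

theorem pathGraph_exists_walk_length {n : ℕ} (k : ℕ) :
    ∀ i j : Fin n, i.val + k = j.val → ∃ p : (pathGraph n).Walk i j, p.length = k := by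
  induction k with
  | zero =>
    intro i j h
    obtain rfl : i = j := Fin.ext h
    exact ⟨.nil, rfl⟩
  | succ k ih =>
    intro i j h
    obtain ⟨p, hp⟩ := ih ⟨i.val + 1, by omega⟩ j (by rw [Fin.val_mk]; omega)
    exact ⟨.cons (pathGraph_adj.mpr (.inl rfl)) p, by simp [hp]⟩

theorem pathGraph_dist {n : ℕ} (i j : Fin n) :
    (pathGraph n).dist i j = Nat.dist i.val j.val := by
  wlog hij : i ≤ j generalizing i j
  · rw [dist_comm, Nat.dist_comm, this j i (le_of_not_ge hij)]
  refine le_antisymm ?_ ?_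
  · obtain ⟨p, hp⟩ := pathGraph_exists_walk_length (j.val - i.val) i j (by omega)
    calc (pathGraph n).dist i j ≤ p.length := dist_le p
      _ = Nat.dist i.val j.val := by rw [hp, Nat.dist_eq_sub_of_le hij]
  · refine (pathGraph_preconnected n i j).natDist_le_dist Fin.val fun x y h => ?_
    rcases pathGraph_adj.mp h with h | h <;> simp only [Nat.dist] <;> omega

theorem pathGraph_dist_injective {n : ℕ} {i : Fin n} (hi : i.val = 0 ∨ i.val + 1 = n) :
    Function.Injective ((pathGraph n).dist i) := by
  intro j k h
  simp only [pathGraph_dist, Nat.dist] at h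
  have := j.isLt
  have := k.isLt
  ext
  omega

theorem pathGraph_ncard_neighborSet_zero {n : ℕ} (hn : 1 < n) :
    ((pathGraph n).neighborSet ⟨0, by omega⟩).ncard = 1 := by
  rw [Set.ncard_eq_one]
  refine ⟨⟨1, hn⟩, ?_⟩
  ext j
  simp only [mem_neighborSet, pathGraph_adj, Set.mem_singleton_iff, Fin.ext_iff]
  omega

theorem pathGraph_eq_end_of_ncard_neighborSet_eq_one {n : ℕ} {i : Fin n}
    (h : ((pathGraph n).neighborSet i).ncard = 1) : i.val = 0 ∨ i.val + 1 = n := by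
  by_contra! hi
  have := i.isLt
  have hprev : (⟨i.val - 1, by omega⟩ : Fin n) ∈ (pathGraph n).neighborSet i := by
    simp only [mem_neighborSet, pathGraph_adj]; omega
  have hnext : (⟨i.val + 1, by omega⟩ : Fin n) ∈ (pathGraph n).neighborSet i :=
    pathGraph_adj.mpr (.inl rfl)
  have hne : (⟨i.val - 1, by omega⟩ : Fin n) ≠ ⟨i.val + 1, by omega⟩ := by
    simp only [ne_eq, Fin.mk.injEq]; omega
  have := Set.ncard_le_ncard (Set.insert_subset hprev (Set.singleton_subset_iff.mpr hnext))
  rw [Set.ncard_pair hne] at this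
  omega

theorem Reachable.exists_adj_dist_add_one {v y : V} (h : G.Reachable v y) (hne : v ≠ y) :
    ∃ u, G.Adj u y ∧ G.dist v u + 1 = G.dist v y := by
  obtain ⟨p, hp⟩ := h.symm.exists_walk_length_eq_dist
  cases p with
  | nil => exact absurd rfl hne
  | @cons _ u _ hyu q =>
    have hq : G.dist v u ≤ q.length := by simpa using dist_le q.reverse
    have htri : G.dist v y ≤ G.dist v u + 1 :=
      dist_eq_one_iff_adj.mpr hyu.symm ▸ hyu.symm.reachable.dist_triangle_right v
    rw [Walk.length_cons, dist_comm] at hp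
    exact ⟨u, hyu.symm, by omega⟩

theorem Connected.adj_iff_of_injective_dist (hG : G.Connected) {v : V}
    (hinj : Function.Injective (G.dist v)) {x y : V} :
    G.Adj x y ↔ G.dist v x + 1 = G.dist v y ∨ G.dist v y + 1 = G.dist v x := by
  constructor
  · intro h
    have hne : G.dist v x ≠ G.dist v y := fun hd => h.ne (hinj hd)
    have := h.diff_dist_adj (u := v)
    omega
  · have key : ∀ x y, G.dist v x + 1 = G.dist v y → G.Adj x y := by
      intro x y hxy
      have hvy : v ≠ y := by rintro rfl; simp at hxy
      obtain ⟨u, hu, hdu⟩ := (hG v y).exists_adj_dist_add_one hvy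
      obtain rfl : u = x := hinj (by omega)
      exact hu
    rintro (h | h)
    exacts [key x y h, (key y x h).symm]

noncomputable def Connected.isoPathGraphOfInjectiveDist [Fintype V] (hG : G.Connected) {v : V}
    (hinj : Function.Injective (G.dist v)) : G ≃g pathGraph (Fintype.card V) where
  toEquiv := .ofBijective (fun x => ⟨G.dist v x, hG.dist_lt_card v x⟩) <|
    (Fintype.bijective_iff_injective_and_card _).mpr
      ⟨fun _ _ h => hinj (Fin.val_eq_of_eq h), Fintype.card_fin _ |>.symm⟩
  map_rel_iff' := by simp [pathGraph_adj, hG.adj_iff_of_injective_dist hinj]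

theorem Connected.injective_dist_iff [Fintype V] (hG : G.Connected)
    (hn : 2 ≤ Fintype.card V) {v : V} :
    Function.Injective (G.dist v) ↔
      Nonempty (G ≃g pathGraph (Fintype.card V)) ∧ (G.neighborSet v).ncard = 1 := by
  constructor
  · intro hinj
    let e := hG.isoPathGraphOfInjectiveDist hinj
    have hev : e v = ⟨0, by omega⟩ := Fin.ext (dist_self (G := G))
    refine ⟨⟨e⟩, ?_⟩
    rw [← e.ncard_neighborSet, hev]
    exact pathGraph_ncard_neighborSet_zero hn
  · rintro ⟨⟨e⟩, hv⟩
    have hend := pathGraph_eq_end_of_ncard_neighborSet_eq_one (e.ncard_neighborSet v ▸ hv)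
    have : G.dist v = (pathGraph _).dist (e v) ∘ e := funext fun x => (e.dist_eq v x).symm
    rw [this]
    exact (pathGraph_dist_injective hend).comp e.injective

end SimpleGraph

theorem Nat.sInf_eq_one_iff {s : Set ℕ} (h0 : 0 ∉ s) : sInf s = 1 ↔ 1 ∈ s := by
  refine ⟨fun h => ?_, fun h1 => le_antisymm (Nat.sInf_le h1) ?_⟩
  · have hs : s.Nonempty := by
      by_contra hs
      rw [Set.not_nonempty_iff_eq_empty.mp hs, Nat.sInf_empty] at h
      exact zero_ne_one h
    exact h ▸ Nat.sInf_mem hs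
  · exact Nat.one_le_iff_ne_zero.mpr fun h => h0 (h ▸ Nat.sInf_mem ⟨1, h1⟩)

theorem isResolving_singleton_iff {G : SimpleGraph V} {v : V} :
    IsResolving G {v} ↔ Function.Injective (G.dist v) := by
  simp only [IsResolving, Set.mem_singleton_iff, exists_eq_left]
  exact ⟨fun h x y hxy => by_contra fun hne => h x y hne hxy, fun h x y hne hxy => hne (h hxy)⟩

theorem isConnResolving_singleton_iff {G : SimpleGraph V} {v : V} :
    IsConnResolving G {v} ↔ IsResolving G {v} :=
  and_iff_left ⟨SimpleGraph.Preconnected.of_subsingleton⟩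

theorem cdimAt_eq_one_iff [Finite V] (G : SimpleGraph V) (v : V) :
    cdimAt G v = 1 ↔ IsResolving G {v} := by
  rw [cdimAt, Nat.sInf_eq_one_iff, ← isConnResolving_singleton_iff]
  · constructor
    · rintro ⟨S, hS, hvS, hcard⟩
      obtain ⟨a, rfl⟩ := Set.ncard_eq_one.mp hcard
      rwa [Set.mem_singleton_iff.mp hvS]
    · exact fun h => ⟨{v}, h, rfl, Set.ncard_singleton v⟩
  · rintro ⟨S, -, hvS, hcard⟩
    exact (Set.ncard_pos S.toFinite).mpr ⟨v, hvS⟩ |>.ne' hcard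

/-- For a finite simple connected graph `G` of order `n ≥ 2` and a
vertex `v`, `cdim_G(v) = 1` iff `G ≅ P_n` and `v` is an end vertex (degree one). -/
theorem stmt_8 {V : Type*} [Fintype V] (G : SimpleGraph V) (hG : G.Connected)
    (hn : 2 ≤ Fintype.card V) (v : V) :
    cdimAt G v = 1 ↔
      Nonempty (G ≃g pathGraph (Fintype.card V)) ∧ (G.neighborSet v).ncard = 1 :=
  (cdimAt_eq_one_iff G v).trans <| isResolving_singleton_iff.trans (hG.injective_dist_iff hn)
end

section
/- Let G be a finite simple connected graph of order n ≥ 2. Then cdim(G) = n − 1 if and only if G is isomorphic to the complete graph K_n, or n ≥ 4 and G is isomorphic to the star K_{1,n−1}. -/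
open SimpleGraph

variable {V : Type*}

/-!
If `cdim G = n - 1`, then for every pair `x ≠ y` such that `G - {x, y}` is connected the set
`V ∖ {x, y}` is not resolving, i.e. `x` and `y` are twins: no third vertex distinguishes them.
A vertex farthest from some `u` has a twin (the farthest vertex among the others), and two
vertices that each have a twin are twins of each other, because `G - {x, y}` retracts onto
the twins and so stays connected. Hence the diameter is at most two and all non-universal
vertices are pairwise twins; if `G` is not complete, this forces a unique universal vertex
whose other vertices form an independent set, i.e. a star, and `P₃` is ruled out directly.
Conversely, all pairs in `K_n` and all pairs of leaves in a star are twins, so a resolving set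
misses at most one of them, and a connected set of leaves is a single vertex.
-/

def IsTwin (G : SimpleGraph V) (x y : V) : Prop :=
  x ≠ y ∧ ∀ z, z ≠ x → z ≠ y → G.dist z x = G.dist z y

def HasTwin (G : SimpleGraph V) (x : V) : Prop :=
  ∃ y, IsTwin G x y

namespace IsTwin

variable {G : SimpleGraph V} {x y z : V}

theorem symm (h : IsTwin G x y) : IsTwin G y x :=
  ⟨h.1.symm, fun z hzy hzx => (h.2 z hzx hzy).symm⟩

theorem adj_of_adj (h : IsTwin G x y) (hzy : z ≠ y) (hzx : G.Adj z x) : G.Adj z y := by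
  rw [← dist_eq_one_iff_adj, ← h.2 z hzx.ne hzy, dist_eq_one_iff_adj]
  exact hzx

end IsTwin

namespace SimpleGraph

variable {G : SimpleGraph V} {u v : V}

theorem Connected.exists_adj_dist_add_one (hG : G.Connected) (huv : u ≠ v) :
    ∃ w, G.Adj w v ∧ G.dist u w + 1 = G.dist u v := by
  obtain ⟨p, hp⟩ := hG.exists_walk_length_eq_dist v u
  cases p with
  | nil => exact absurd rfl huv
  | @cons _ w _ hvw q =>
    refine ⟨w, hvw.symm, le_antisymm ?_ ?_⟩
    · rw [dist_comm (u := u) (v := v), ← hp, Walk.length_cons, dist_comm]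
      exact Nat.add_le_add_right (dist_le q) 1
    · calc G.dist u v ≤ G.dist u w + G.dist w v := hG.dist_triangle
        _ = G.dist u w + 1 := by rw [dist_eq_one_iff_adj.mpr hvw.symm]

theorem Connected.two_lt_card_of_ne_top [Fintype V] (hG : G.Connected) (hnt : G ≠ ⊤) :
    2 < Fintype.card V := by
  obtain ⟨u, hu⟩ := not_forall.mp (mt eq_top_iff_forall_isUniversal.mpr hnt)
  obtain ⟨v, huv, hnadj⟩ : ∃ v, u ≠ v ∧ ¬ G.Adj u v := by simpa [IsUniversal] using hu
  obtain ⟨p, hp⟩ := hG.exists_walk_length_eq_dist u v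
  obtain ⟨x, a, b, hxa, hab, -, hxb⟩ :=
    p.exists_adj_adj_not_adj_ne hp (hG.one_lt_dist_of_ne_of_not_adj huv hnadj)
  exact Fintype.two_lt_card_iff.mpr ⟨x, a, b, hxa.ne, hxb, hab.ne⟩

/-- Geodesics from `u` to the vertices outside `T` avoid `T`. -/
theorem Connected.induce_compl_of_forall_dist_le (hG : G.Connected) {T : Set V} (hu : u ∉ T)
    (hfar : ∀ v ∉ T, ∀ t ∈ T, G.dist u v ≤ G.dist u t) : (G.induce Tᶜ).Connected := by
  have reach : ∀ k, ∀ v (hv : v ∈ Tᶜ), G.dist u v = k →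
      (G.induce Tᶜ).Reachable ⟨u, hu⟩ ⟨v, hv⟩ := by
    intro k
    induction k using Nat.strong_induction_on with
    | _ k ih =>
      intro v hv hk
      obtain rfl | huv := eq_or_ne u v
      · rfl
      obtain ⟨w, hwv, hw⟩ := hG.exists_adj_dist_add_one huv
      have hwT : w ∈ Tᶜ := fun hwT => by have := hfar v hv w hwT; omega
      exact (ih _ (by omega) w hwT rfl).trans (induce_adj.mpr hwv).reachable
  refine (connected_iff _).mpr ⟨fun a b => ?_, ⟨⟨u, hu⟩⟩⟩
  exact (reach _ a a.2 rfl).symm.trans (reach _ b b.2 rfl)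

/-- Such an `f` is a homomorphism up to contracting edges, so it carries walks of `G` to walks
inside `S`. -/
theorem Connected.induce_of_twin_retraction (hG : G.Connected) {S : Set V} (f : V → V)
    (hfS : ∀ v, f v ∈ S) (hfix : ∀ v ∈ S, f v = v) (htwin : ∀ v, f v = v ∨ IsTwin G v (f v)) :
    (G.induce S).Connected := by
  have adj_of_twin : ∀ {a a' b}, (a' = a ∨ IsTwin G a a') → G.Adj a b → b ≠ a' →
      G.Adj a' b := by
    rintro a a' b (rfl | h) hab hb
    exacts [hab, (h.adj_of_adj hb hab.symm).symm]
  have step : ∀ {a b}, G.Adj a b → (G.induce S).Reachable ⟨f a, hfS a⟩ ⟨f b, hfS b⟩ := by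
    intro a b hab
    by_cases hfab : f a = f b
    · exact (Subtype.ext hfab : (⟨f a, hfS a⟩ : S) = ⟨f b, hfS b⟩) ▸ .rfl
    have hb : b ≠ f a := fun hb => hfab (by rw [hb, hfix _ (hfS a)])
    have hab' := adj_of_twin (htwin a) hab hb
    exact (induce_adj.mpr (adj_of_twin (htwin b) hab'.symm hfab).symm).reachable
  have reach : ∀ {a b} (_ : G.Walk a b), (G.induce S).Reachable ⟨f a, hfS a⟩ ⟨f b, hfS b⟩ := by
    intro a b p
    induction p with
    | nil => rfl
    | cons hab _ ih => exact (step hab).trans ih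
  have : Nonempty V := hG.nonempty
  refine (connected_iff _).mpr ⟨fun a b => ?_, ⟨⟨f (Classical.arbitrary _), hfS _⟩⟩⟩
  obtain ⟨p⟩ := hG a b
  simpa only [hfix _ a.2, hfix _ b.2] using reach p

theorem Connected.induce_compl_pair_of_isTwin (hG : G.Connected) {x y x' y' : V}
    (hx : IsTwin G x x') (hy : IsTwin G y y') (hx'y : x' ≠ y) (hy'x : y' ≠ x) :
    (G.induce ({x, y}ᶜ : Set V)).Connected := by
  classical
  refine hG.induce_of_twin_retraction (fun v => if v = x then x' else if v = y then y' else v)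
    (fun v => ?_) (fun v hv => ?_) (fun v => ?_)
  · have := hx.1
    have := hy.1
    split_ifs <;> grind
  · grind
  · split_ifs with hvx hvy
    exacts [.inr (hvx ▸ hx), .inr (hvy ▸ hy), .inl rfl]

theorem IsTwin.dist_le_two {x y : V} (hG : G.Connected) (h : IsTwin G x y) :
    G.dist x y ≤ 2 := by
  obtain ⟨w, hwy, hw⟩ := hG.exists_adj_dist_add_one h.1
  obtain rfl | hwx := eq_or_ne w x
  · rw [dist_self] at hw
    omega
  · have : G.dist w x = 1 := by rw [h.2 w hwx hwy.ne, dist_eq_one_iff_adj.mpr hwy]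
    rw [dist_comm] at this
    omega

theorem dist_starGraph_of_ne {c x y : V} (hxy : x ≠ y) (hx : x ≠ c) (hy : y ≠ c) :
    (starGraph c).dist x y = 2 := by
  refine le_antisymm ?_
    ((connected_starGraph c).one_lt_dist_of_ne_of_not_adj hxy (by simp [*]))
  simpa using dist_le
    (.cons (starGraph_center_adj' hx.symm) (.cons (starGraph_center_adj hy.symm) .nil))

def Iso.starGraph {W : Type*} (e : V ≃ W) {c : V} {d : W} (hcd : e c = d) :
    starGraph c ≃g starGraph d :=
  ⟨e, by subst hcd; simp⟩

theorem completeBipartiteGraph_fin_one_eq_starGraph (W : Type*) :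
    completeBipartiteGraph (Fin 1) W = starGraph (Sum.inl 0) := by
  ext (a | a) (b | b) <;> simp [Fin.fin_one_eq_zero]

theorem nonempty_iso_completeGraph_iff {W : Type*} (e₀ : V ≃ W) :
    Nonempty (G ≃g completeGraph W) ↔ G = ⊤ := by
  refine ⟨fun ⟨e⟩ => ?_, fun h => h ▸ ⟨Iso.completeGraph e₀⟩⟩
  ext a b
  rw [← e.map_adj_iff]
  simp

theorem nonempty_iso_starGraph_iff {W : Type*} (e₀ : V ≃ W) (d : W) :
    Nonempty (G ≃g starGraph d) ↔ ∃ c, G = starGraph c := by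
  refine ⟨fun ⟨e⟩ => ⟨e.symm d, ?_⟩, fun ⟨c, hc⟩ => hc ▸ ?_⟩
  · ext a b
    rw [← e.map_adj_iff]
    simp [RelIso.eq_symm_apply]
  · classical
    exact ⟨Iso.starGraph (e₀.trans (Equiv.swap (e₀ c) d)) (by simp)⟩

end SimpleGraph

section Resolving

variable {G : SimpleGraph V} {S : Set V}

theorem isResolving_of_forall_notMem (hG : G.Connected)
    (h : ∀ x ∉ S, ∀ y ∉ S, x ≠ y → ∃ z ∈ S, G.dist z x ≠ G.dist z y) : IsResolving G S := by
  intro x y hxy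
  by_cases hx : x ∈ S
  · exact ⟨x, hx, by rw [dist_self]; exact (hG.pos_dist_of_ne hxy).ne⟩
  by_cases hy : y ∈ S
  · exact ⟨y, hy, by rw [dist_self]; exact (hG.pos_dist_of_ne hxy.symm).ne'⟩
  exact h x hx y hy hxy

theorem isResolving_compl_singleton (hG : G.Connected) (x : V) : IsResolving G {x}ᶜ :=
  isResolving_of_forall_notMem hG fun a ha b hb hab => by simp_all

theorem isResolving_compl_pair_of_not_isTwin (hG : G.Connected) {x y : V} (hxy : x ≠ y)
    (h : ¬ IsTwin G x y) : IsResolving G ({x, y}ᶜ : Set V) := by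
  have hd : ∃ z ∈ ({x, y}ᶜ : Set V), G.dist z x ≠ G.dist z y := by
    simpa [IsTwin, hxy, and_assoc] using h
  refine isResolving_of_forall_notMem hG fun a ha b hb hab => ?_
  simp only [Set.mem_compl_iff, not_not, Set.mem_insert_iff, Set.mem_singleton_iff] at ha hb
  obtain ⟨z, hz, hzd⟩ := hd
  rcases ha with rfl | rfl <;> rcases hb with rfl | rfl
  exacts [absurd rfl hab, ⟨z, hz, hzd⟩, ⟨z, hz, hzd.symm⟩, absurd rfl hab]

theorem IsResolving.subsingleton_diff (hS : IsResolving G S) {T : Set V}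
    (hT : ∀ x ∈ T, ∀ y ∈ T, x ≠ y → IsTwin G x y) : (T \ S).Subsingleton := by
  rintro x ⟨hxT, hxS⟩ y ⟨hyT, hyS⟩
  by_contra hxy
  obtain ⟨z, hz, hzd⟩ := hS x y hxy
  exact hzd ((hT x hxT y hyT hxy).2 z (ne_of_mem_of_not_mem hz hxS)
    (ne_of_mem_of_not_mem hz hyS))

end Resolving

def RemovablePairsAreTwins (G : SimpleGraph V) : Prop :=
  ∀ x y, x ≠ y → (G.induce ({x, y}ᶜ : Set V)).Connected → IsTwin G x y

section ConnectedMetricDimension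

variable {G : SimpleGraph V}

theorem cdim_le_ncard {S : Set V} (hS : IsConnResolving G S) : cdim G ≤ S.ncard :=
  Nat.sInf_le ⟨S, hS, rfl⟩

variable [Fintype V]

theorem ncard_compl_singleton (x : V) : ({x}ᶜ : Set V).ncard = Fintype.card V - 1 := by
  rw [Set.ncard_compl, Set.ncard_singleton, Nat.card_eq_fintype_card]

theorem ncard_compl_pair {x y : V} (hxy : x ≠ y) :
    ({x, y}ᶜ : Set V).ncard = Fintype.card V - 2 := by
  rw [Set.ncard_compl, Set.ncard_pair hxy, Nat.card_eq_fintype_card]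

theorem card_sub_one_le_ncard_of_subsingleton_compl {S : Set V} (h : Sᶜ.Subsingleton) :
    Fintype.card V - 1 ≤ S.ncard := by
  have := Set.ncard_add_ncard_compl S
  have := Set.ncard_le_one_iff_subsingleton.mpr h
  rw [Nat.card_eq_fintype_card] at *
  omega

theorem exists_isConnResolving_compl_singleton (hG : G.Connected) (hn : 2 ≤ Fintype.card V) :
    ∃ x, IsConnResolving G {x}ᶜ := by
  obtain ⟨u, y, huy⟩ := Fintype.exists_pair_of_one_lt_card hn
  -- a vertex farthest from `u` is not a cut vertex
  obtain ⟨x, -, hx⟩ := Finset.exists_max_image Finset.univ (G.dist u) ⟨u, Finset.mem_univ _⟩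
  have hux : u ≠ x := by
    rintro rfl
    have := hx y (Finset.mem_univ _)
    rw [dist_self, Nat.le_zero, hG.dist_eq_zero_iff] at this
    exact huy this
  refine ⟨x, isResolving_compl_singleton hG x, hG.induce_compl_of_forall_dist_le hux ?_⟩
  rintro v - t rfl
  exact hx v (Finset.mem_univ _)

theorem cdim_eq_card_sub_one_of_forall_le (hG : G.Connected) (hn : 2 ≤ Fintype.card V)
    (h : ∀ S, IsConnResolving G S → Fintype.card V - 1 ≤ S.ncard) :
    cdim G = Fintype.card V - 1 := by
  obtain ⟨x, hx⟩ := exists_isConnResolving_compl_singleton hG hn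
  refine ((cdim_le_ncard hx).trans_eq (ncard_compl_singleton x)).antisymm
    (le_csInf ⟨_, {x}ᶜ, hx, rfl⟩ ?_)
  rintro _ ⟨S, hS, rfl⟩
  exact h S hS

theorem removablePairsAreTwins_of_cdim_eq (hG : G.Connected)
    (h : cdim G = Fintype.card V - 1) : RemovablePairsAreTwins G := by
  intro x y hxy hconn
  by_contra htwin
  have := cdim_le_ncard ⟨isResolving_compl_pair_of_not_isTwin hG hxy htwin, hconn⟩
  rw [h, ncard_compl_pair hxy] at this
  have := Fintype.one_lt_card_iff.mpr ⟨x, y, hxy⟩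
  omega

end ConnectedMetricDimension

section CompleteAndStar

theorem cdim_top [Fintype V] (hn : 2 ≤ Fintype.card V) :
    cdim (⊤ : SimpleGraph V) = Fintype.card V - 1 := by
  have : Nonempty V := Fintype.card_pos_iff.mp (by omega)
  refine cdim_eq_card_sub_one_of_forall_le connected_top hn fun S hS => ?_
  apply card_sub_one_le_ncard_of_subsingleton_compl
  rw [Set.compl_eq_univ_sdiff]
  exact hS.1.subsingleton_diff fun x _ y _ hxy =>
    ⟨hxy, fun _ hzx hzy => by rw [dist_top_of_ne hzx, dist_top_of_ne hzy]⟩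

variable {c : V}

theorem isTwin_starGraph {x y : V} (hxy : x ≠ y) (hx : x ≠ c) (hy : y ≠ c) :
    IsTwin (starGraph c) x y := by
  refine ⟨hxy, fun z hzx hzy => ?_⟩
  obtain rfl | hzc := eq_or_ne z c
  · rw [dist_eq_one_iff_adj.mpr (starGraph_center_adj hx.symm),
      dist_eq_one_iff_adj.mpr (starGraph_center_adj hy.symm)]
  · rw [dist_starGraph_of_ne hzx hzc hx, dist_starGraph_of_ne hzy hzc hy]

theorem subsingleton_of_connected_induce_starGraph {S : Set V} (hc : c ∉ S)
    (hS : ((starGraph c).induce S).Connected) : S.Subsingleton := by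
  have hbot : (starGraph c).induce S = ⊥ := by
    ext a b
    simp only [comap_adj, Function.Embedding.coe_subtype, starGraph_adj, bot_adj, iff_false]
    exact fun h => h.2.elim (fun ha => hc (ha ▸ a.2)) (fun hb => hc (hb ▸ b.2))
  rw [hbot, connected_bot_iff, Set.subsingleton_coe] at hS
  exact hS.1

theorem cdim_starGraph [Fintype V] (hn : 4 ≤ Fintype.card V) :
    cdim (starGraph c) = Fintype.card V - 1 := by
  refine cdim_eq_card_sub_one_of_forall_le (connected_starGraph c) (by omega) fun S hS => ?_
  have hleaves := hS.1.subsingleton_diff (T := {c}ᶜ) fun x hx y hy hxy =>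
    isTwin_starGraph hxy hx hy
  by_cases hcS : c ∈ S
  · exact card_sub_one_le_ncard_of_subsingleton_compl
      (hleaves.anti fun v hv => ⟨fun h => hv (h ▸ hcS), hv⟩)
  · exfalso
    have hS1 := Set.ncard_le_one_iff_subsingleton.mpr
      (subsingleton_of_connected_induce_starGraph hcS hS.2)
    have hL1 := Set.ncard_le_one_iff_subsingleton.mpr hleaves
    have hcover : Set.univ ⊆ insert c (S ∪ ({c}ᶜ \ S)) := fun v _ => by
      by_cases v = c <;> by_cases v ∈ S <;> simp_all
    have := (Set.ncard_le_ncard hcover).trans ((Set.ncard_insert_le _ _).trans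
      (Nat.add_le_add_right (Set.ncard_union_le _ _) 1))
    rw [Set.ncard_univ, Nat.card_eq_fintype_card] at this
    omega

end CompleteAndStar

namespace RemovablePairsAreTwins

variable {G : SimpleGraph V}

theorem isTwin_of_hasTwin (hrem : RemovablePairsAreTwins G) (hG : G.Connected) {x y : V}
    (hxy : x ≠ y) (hx : HasTwin G x) (hy : HasTwin G y) : IsTwin G x y := by
  obtain ⟨x', hx'⟩ := hx
  obtain ⟨y', hy'⟩ := hy
  obtain rfl | hx'y := eq_or_ne x' y
  · exact hx'
  obtain rfl | hy'x := eq_or_ne y' x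
  · exact hy'.symm
  exact hrem x y hxy (hG.induce_compl_pair_of_isTwin hx' hy' hx'y hy'x)

variable [Fintype V]

/-- The twin is the farthest vertex from `u` other than `x`: removing both keeps `G`
connected. -/
theorem hasTwin_of_forall_dist_le (hrem : RemovablePairsAreTwins G) (hG : G.Connected)
    (h3 : 2 < Fintype.card V) {u x : V} (hux : u ≠ x) (hfar : ∀ v, G.dist u v ≤ G.dist u x) :
    HasTwin G x := by
  classical
  obtain ⟨y, hyx, hy⟩ := Finset.exists_max_image (Finset.univ.filter (· ≠ x)) (G.dist u)
    ⟨u, by simp [hux]⟩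
  simp only [Finset.mem_filter, Finset.mem_univ, true_and] at hyx hy
  have huy : u ≠ y := by
    rintro rfl
    have hV : ∀ v, v ≠ x → v = u := fun v hv => by
      simpa [hG.dist_eq_zero_iff, eq_comm] using hy v hv
    have hsub : Finset.univ ⊆ ({u, x} : Finset V) := fun v _ => by
      by_cases hv : v = x
      · simp [hv]
      · simp [hV v hv]
    have := (Finset.card_le_card hsub).trans Finset.card_le_two
    rw [Finset.card_univ] at this
    omega
  refine ⟨y, hrem x y (Ne.symm hyx) (hG.induce_compl_of_forall_dist_le (u := u) ?_ ?_)⟩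
  · simp [hux, huy]
  · intro v hv t ht
    simp only [Set.mem_insert_iff, Set.mem_singleton_iff, not_or] at hv ht
    rcases ht with rfl | rfl
    exacts [hfar v, hy v hv.1]

/-- The endpoints of a diametral pair both have twins, hence are twins of each other. -/
theorem dist_le_two (hrem : RemovablePairsAreTwins G) (hG : G.Connected)
    (h3 : 2 < Fintype.card V) (u v : V) : G.dist u v ≤ 2 := by
  have : Nonempty V := hG.nonempty
  obtain ⟨p, q, hpq⟩ := G.exists_dist_eq_diam
  have hdiam : ∀ a b, G.dist a b ≤ G.dist p q := fun a b =>
    hpq ▸ dist_le_diam (connected_iff_ediam_ne_top.mp hG)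
  obtain rfl | hne := eq_or_ne p q
  · have := hdiam u v
    rw [dist_self] at this
    omega
  have hp := hrem.hasTwin_of_forall_dist_le hG h3 hne.symm fun a =>
    (hdiam q a).trans_eq dist_comm
  have hq := hrem.hasTwin_of_forall_dist_le hG h3 hne (hdiam p)
  exact (hdiam u v).trans ((hrem.isTwin_of_hasTwin hG hne hp hq).dist_le_two hG)

theorem hasTwin_of_not_isUniversal (hrem : RemovablePairsAreTwins G) (hG : G.Connected)
    (h3 : 2 < Fintype.card V) {w : V} (hw : ¬ G.IsUniversal w) : HasTwin G w := by
  obtain ⟨v, hwv, hnadj⟩ : ∃ v, w ≠ v ∧ ¬ G.Adj w v := by simpa [IsUniversal] using hw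
  refine hrem.hasTwin_of_forall_dist_le hG h3 hwv.symm fun a => ?_
  have := hG.one_lt_dist_of_ne_of_not_adj hwv.symm (fun h => hnadj h.symm)
  have := hrem.dist_le_two hG h3 v a
  omega

theorem isTwin_of_not_isUniversal (hrem : RemovablePairsAreTwins G) (hG : G.Connected)
    (h3 : 2 < Fintype.card V) {x y : V} (hxy : x ≠ y) (hx : ¬ G.IsUniversal x)
    (hy : ¬ G.IsUniversal y) : IsTwin G x y :=
  hrem.isTwin_of_hasTwin hG hxy (hrem.hasTwin_of_not_isUniversal hG h3 hx)
    (hrem.hasTwin_of_not_isUniversal hG h3 hy)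

theorem exists_isUniversal (hrem : RemovablePairsAreTwins G) (hG : G.Connected)
    (h3 : 2 < Fintype.card V) : ∃ c, G.IsUniversal c := by
  by_contra! hno
  obtain ⟨a⟩ := hG.nonempty
  obtain ⟨c, hac, hnadj⟩ : ∃ c, a ≠ c ∧ ¬ G.Adj a c := by simpa [IsUniversal] using hno a
  obtain ⟨b, hbc, hb⟩ := hG.exists_adj_dist_add_one hac
  have := hG.one_lt_dist_of_ne_of_not_adj hac hnadj
  have := hrem.dist_le_two hG h3 a c
  have hab : a ≠ b := by
    rintro rfl
    rw [dist_self] at hb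
    omega
  have := (hrem.isTwin_of_not_isUniversal hG h3 hbc.ne (hno b) (hno c)).2 a hab hac
  omega

theorem eq_of_isUniversal (hrem : RemovablePairsAreTwins G) (hG : G.Connected)
    (h3 : 2 < Fintype.card V) (hnt : G ≠ ⊤) {c c' : V} (hc : G.IsUniversal c)
    (hc' : G.IsUniversal c') : c = c' := by
  by_contra hcc'
  obtain ⟨a, ha⟩ := not_forall.mp (mt eq_top_iff_forall_isUniversal.mpr hnt)
  obtain ⟨b, hab, hnadj⟩ : ∃ b, a ≠ b ∧ ¬ G.Adj a b := by simpa [IsUniversal] using ha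
  have hca : c ≠ a := fun h => ha (h ▸ hc)
  have hcb : c ≠ b := by
    rintro rfl
    exact hnadj (hc hca).symm
  have htwin : IsTwin G c c' := ⟨hcc', fun z hzc hzc' => by
    rw [dist_eq_one_iff_adj.mpr (hc hzc.symm).symm, dist_eq_one_iff_adj.mpr (hc' hzc'.symm).symm]⟩
  have := (hrem.isTwin_of_hasTwin hG hca ⟨c', htwin⟩
    (hrem.hasTwin_of_not_isUniversal hG h3 ha)).2 b hcb.symm hab.symm
  rw [dist_eq_one_iff_adj.mpr (hc hcb).symm] at this
  have := hG.one_lt_dist_of_ne_of_not_adj hab.symm (fun h => hnadj h.symm)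
  omega

theorem not_adj_of_not_isUniversal (hrem : RemovablePairsAreTwins G) (hG : G.Connected)
    (h3 : 2 < Fintype.card V) {x y : V} (hx : ¬ G.IsUniversal x) (hy : ¬ G.IsUniversal y) :
    ¬ G.Adj x y := by
  intro hxy
  obtain ⟨v, hxv, hnadj⟩ : ∃ v, x ≠ v ∧ ¬ G.Adj x v := by simpa [IsUniversal] using hx
  have hvy : v ≠ y := by
    rintro rfl
    exact hnadj hxy
  have hv : ¬ G.IsUniversal v := fun hv => hnadj (hv hxv.symm).symm
  have hyv := (hrem.isTwin_of_not_isUniversal hG h3 hxv hx hv).adj_of_adj hvy.symm hxy.symm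
  exact hnadj ((hrem.isTwin_of_not_isUniversal hG h3 hxy.ne hx hy).symm.adj_of_adj hxv.symm
    hyv.symm).symm

theorem eq_starGraph_of_isUniversal (hrem : RemovablePairsAreTwins G) (hG : G.Connected)
    (h3 : 2 < Fintype.card V) (hnt : G ≠ ⊤) {c : V} (hc : G.IsUniversal c) :
    G = starGraph c := by
  have hleaf : ∀ {v}, v ≠ c → ¬ G.IsUniversal v := fun hvc hv =>
    hvc (hrem.eq_of_isUniversal hG h3 hnt hv hc)
  ext x y
  rw [starGraph_adj]
  refine ⟨fun hxy => ⟨hxy.ne, ?_⟩, ?_⟩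
  · by_contra! h
    exact hrem.not_adj_of_not_isUniversal hG h3 (hleaf h.1) (hleaf h.2) hxy
  · rintro ⟨hxy, rfl | rfl⟩
    exacts [hc hxy, (hc hxy.symm).symm]

/-- On three vertices, removing a leaf and the centre leaves the other leaf, which tells the
removed pair apart. -/
theorem four_le_card_of_eq_starGraph (hrem : RemovablePairsAreTwins G)
    (h3 : 2 < Fintype.card V) {c : V} (hstar : G = starGraph c) : 4 ≤ Fintype.card V := by
  subst hstar
  by_contra h4
  obtain ⟨a, b, ha, hb, hab⟩ := (Set.one_lt_ncard_iff (Set.toFinite _)).mp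
    (by rw [ncard_compl_singleton]; omega : 1 < ({c}ᶜ : Set V).ncard)
  rw [Set.mem_compl_singleton_iff] at ha hb
  have hbS : b ∈ ({a, c}ᶜ : Set V) := by simp [hab.symm, hb]
  have hS : ({a, c}ᶜ : Set V).Subsingleton :=
    Set.ncard_le_one_iff_subsingleton.mp (by rw [ncard_compl_pair ha]; omega)
  have htwin := hrem a c ha ((connected_starGraph c).induce_compl_of_forall_dist_le hbS
    fun v hv _ _ => by rw [hS hv hbS, dist_self]; exact Nat.zero_le _)
  have := htwin.2 b hab.symm hb
  rw [dist_starGraph_of_ne hab.symm hb ha,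
    dist_eq_one_iff_adj.mpr (starGraph_center_adj' hb.symm)] at this
  omega

theorem exists_eq_starGraph (hrem : RemovablePairsAreTwins G) (hG : G.Connected)
    (hnt : G ≠ ⊤) : 4 ≤ Fintype.card V ∧ ∃ c, G = starGraph c := by
  have h3 := hG.two_lt_card_of_ne_top hnt
  obtain ⟨c, hc⟩ := hrem.exists_isUniversal hG h3
  have hstar := hrem.eq_starGraph_of_isUniversal hG h3 hnt hc
  exact ⟨hrem.four_le_card_of_eq_starGraph h3 hstar, c, hstar⟩

end RemovablePairsAreTwins

/-- For a finite simple connected graph `G` of order `n ≥ 2`,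
`cdim(G) = n - 1` iff `G ≅ K_n`, or `n ≥ 4` and `G ≅ K_{1,n-1}`. -/
theorem stmt_10 {V : Type*} [Fintype V] (G : SimpleGraph V) (hG : G.Connected)
    (hn : 2 ≤ Fintype.card V) :
    cdim G = Fintype.card V - 1 ↔
      Nonempty (G ≃g completeGraph (Fin (Fintype.card V))) ∨
        (4 ≤ Fintype.card V ∧
          Nonempty (G ≃g completeBipartiteGraph (Fin 1) (Fin (Fintype.card V - 1)))) := by
  have e : V ≃ Fin 1 ⊕ Fin (Fintype.card V - 1) :=
    Fintype.equivOfCardEq (by simp only [Fintype.card_sum, Fintype.card_fin]; omega)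
  rw [nonempty_iso_completeGraph_iff (Fintype.equivFin V),
    completeBipartiteGraph_fin_one_eq_starGraph, nonempty_iso_starGraph_iff e]
  constructor
  · intro h
    by_cases htop : G = ⊤
    · exact .inl htop
    · exact .inr ((removablePairsAreTwins_of_cdim_eq hG h).exists_eq_starGraph hG htop)
  · rintro (rfl | ⟨h4, c, rfl⟩)
    exacts [cdim_top hn, cdim_starGraph h4]
end

section
/- Let T be a finite tree (a connected acyclic simple graph) having exactly one exterior major vertex, i.e., ex(T) = 1. Then cdim(T) = σ(T), the number of end vertices of T. -/
open SimpleGraph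

variable {V : Type*}

/-- The degree of a vertex, as the size of its neighbor set. -/
noncomputable def deg (G : SimpleGraph V) (v : V) : ℕ := (G.neighborSet v).ncard

/-- An end vertex is a vertex of degree one. -/
def IsEndVertex (G : SimpleGraph V) (v : V) : Prop := deg G v = 1

/-- A major vertex is a vertex of degree at least three. -/
def IsMajorVertex (G : SimpleGraph V) (v : V) : Prop := 3 ≤ deg G v

/-- `ℓ` is a terminal vertex of the major vertex `v` if `ℓ` is an end vertex and
`d(ℓ,v) < d(ℓ,w)` for every other major vertex `w`. -/
def IsTerminalOf (G : SimpleGraph V) (ℓ v : V) : Prop :=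
  IsEndVertex G ℓ ∧ IsMajorVertex G v ∧
    ∀ w : V, IsMajorVertex G w → w ≠ v → G.dist ℓ v < G.dist ℓ w

/-- An exterior major vertex is a major vertex with at least one terminal vertex. -/
def IsExteriorMajor (G : SimpleGraph V) (v : V) : Prop :=
  IsMajorVertex G v ∧ ∃ ℓ : V, IsTerminalOf G ℓ v

/-!
Let `c` be the exterior major vertex. Every major vertex equals `c`: a major vertex farthest from
`c` is exterior, because the branch at it pointing away from `c` contains no major vertex, so the
end vertices of that branch are terminal. Thus `T` is a spider with centre `c`. If two branches at
`c` missed a resolving set `S`, their roots would have the same distance `d(z, c) + 1` from every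
`z ∈ S`; so `S` meets all but at most one of the `deg c ≥ 3` branches, and if `S` is connected it
must then contain `c`. This gives `|S| ≥ deg c`, attained by `c` together with all but one of its
neighbours (vertices of a leg are told apart by their depth). Finally the handshake lemma shows
that a spider has `deg c` end vertices.
-/

namespace SimpleGraph

variable {T : SimpleGraph V} {b b' c w x y z : V} {S : Set V}

/-- For an edge `wb` of a tree, the vertices on `b`'s side of it, i.e. the component of `T - wb`
containing `b`. -/
def branch (T : SimpleGraph V) (w b : V) : Set V := {x | T.dist b x + 1 = T.dist w x}

@[simp] lemma mem_branch : x ∈ T.branch w b ↔ T.dist b x + 1 = T.dist w x := Iff.rfl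

lemma notMem_branch_self : w ∉ T.branch w b := by simp

lemma mem_branch_of_adj (h : T.Adj w b) : b ∈ T.branch w b := by
  simp [dist_eq_one_iff_adj.2 h]

lemma Connected.exists_adj_mem_branch (hG : T.Connected) (h : w ≠ x) :
    ∃ b, T.Adj w b ∧ x ∈ T.branch w b := by
  obtain ⟨p, -, hp⟩ := hG.exists_path_of_dist w x
  cases p with
  | nil => exact absurd rfl h
  | @cons _ b _ hwb q =>
    refine ⟨b, hwb, ?_⟩
    have hq := dist_le q
    have htri := hG.dist_triangle (u := w) (v := b) (w := x)
    rw [Walk.length_cons] at hp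
    rw [dist_eq_one_iff_adj.2 hwb] at htri
    rw [mem_branch]
    omega

lemma isEndVertex_of_forall_adj_eq (h : T.Adj x y) (hy : ∀ z, T.Adj x z → z = y) :
    IsEndVertex T x := by
  have : T.neighborSet x = {y} := Set.eq_singleton_iff_unique_mem.2 ⟨h, hy⟩
  rw [IsEndVertex, deg, this, Set.ncard_singleton]

lemma three_le_deg [Finite V] {a₁ a₂ a₃ : V} (h₁ : T.Adj x a₁) (h₂ : T.Adj x a₂) (h₃ : T.Adj x a₃)
    (h₁₂ : a₁ ≠ a₂) (h₁₃ : a₁ ≠ a₃) (h₂₃ : a₂ ≠ a₃) : 3 ≤ deg T x := by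
  have hsub : ({a₁, a₂, a₃} : Set V) ⊆ T.neighborSet x := by
    rintro _ (rfl | rfl | rfl) <;> assumption
  have := Set.ncard_le_ncard hsub
  rwa [Set.ncard_eq_three.2 ⟨a₁, a₂, a₃, h₁₂, h₁₃, h₂₃, rfl⟩] at this

lemma connected_induce_insert_of_subset_neighborSet (hS : S ⊆ T.neighborSet c) :
    (T.induce (insert c S)).Connected := by
  refine T.induce_connected_of_patches c (Set.mem_insert c S) fun {v} hv => ?_
  rcases hv with rfl | hv
  · exact ⟨{v}, by simp, rfl, rfl, Reachable.refl _⟩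
  · exact ⟨{c, v}, Set.insert_subset_insert (Set.singleton_subset_iff.2 hv), by simp, by simp,
      (induce_pair_connected_of_adj (hS hv)).preconnected _ _⟩

namespace IsTree

variable (hT : T.IsTree)
include hT

lemma length_eq_dist {u v : V} {p : T.Walk u v} (hp : p.IsPath) : p.length = T.dist u v := by
  obtain ⟨q, hq, hl⟩ := hT.connected.exists_path_of_dist u v
  rw [(hT.existsUnique_path u v).unique hp hq, hl]

lemma mem_support_iff_dist_add_dist {u v : V} {p : T.Walk u v} (hp : p.IsPath) :
    w ∈ p.support ↔ T.dist u w + T.dist w v = T.dist u v := by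
  classical
  constructor
  · intro hw
    have hlen := congrArg Walk.length (p.take_spec hw)
    rw [Walk.length_append] at hlen
    rw [← hT.length_eq_dist hp, ← hT.length_eq_dist (hp.takeUntil hw),
      ← hT.length_eq_dist (hp.dropUntil hw), hlen]
  · intro h
    obtain ⟨q₁, -, l₁⟩ := hT.connected.exists_path_of_dist u w
    obtain ⟨q₂, -, l₂⟩ := hT.connected.exists_path_of_dist w v
    have hq : (q₁.append q₂).IsPath :=
      (q₁.append q₂).isPath_of_length_eq_dist (by rw [Walk.length_append, l₁, l₂, h])
    rw [(hT.existsUnique_path u v).unique hp hq, Walk.mem_support_append_iff]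
    exact Or.inl q₁.end_mem_support

lemma eq_of_mem_branch (hb : T.Adj w b) (hb' : T.Adj w b') (hx : x ∈ T.branch w b)
    (hx' : x ∈ T.branch w b') : b = b' := by
  obtain ⟨p, hp, -⟩ := hT.connected.exists_path_of_dist w x
  have hsnd : ∀ b, T.Adj w b → x ∈ T.branch w b → b = p.snd := fun b hb hx =>
    hT.isAcyclic.eq_snd_of_adj_start hp hb <| (hT.mem_support_iff_dist_add_dist hp).2 <| by
      rw [mem_branch] at hx
      rw [dist_eq_one_iff_adj.2 hb]
      omega
  rw [hsnd b hb hx, hsnd b' hb' hx']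

lemma dist_eq_add_one_of_notMem_branch (hb : T.Adj w b) (hy : y ∉ T.branch w b) :
    T.dist b y = T.dist w y + 1 := by
  have := hT.dist_eq_dist_add_one_of_adj y hb
  rw [mem_branch] at hy
  rw [dist_comm (u := y), dist_comm (u := y)] at this
  omega

lemma eq_of_adj_of_notMem_branch (hb : T.Adj w b) (hz : z ∈ T.branch w b) (hzy : T.Adj z y)
    (hy : y ∉ T.branch w b) : y = w := by
  have hby := hT.dist_eq_add_one_of_notMem_branch hb hy
  rw [mem_branch] at hz
  have hwz := hT.dist_eq_dist_add_one_of_adj w hzy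
  have hbz := hT.dist_eq_dist_add_one_of_adj b hzy
  by_cases hzb : z = b
  · subst hzb
    rw [dist_eq_one_iff_adj.2 hb] at hwz
    rw [dist_self] at hbz
    exact ((hT.connected.dist_eq_zero_iff).1 (by omega : T.dist w y = 0)).symm
  -- `y` lies towards `w` from `z`, and so does the neighbour `y'` of `z` towards `b`
  obtain ⟨y', hzy', hby'⟩ := hT.connected.exists_adj_mem_branch hzb
  have hwy' : w ∈ T.branch z y' := by
    have htri := hT.connected.dist_triangle (u := w) (v := b) (w := y')
    have := hT.dist_eq_dist_add_one_of_adj w hzy'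
    rw [mem_branch, dist_comm (u := y'), dist_comm (u := z)] at hby'
    rw [mem_branch]
    rw [dist_eq_one_iff_adj.2 hb] at htri
    rw [dist_comm (u := y'), dist_comm (u := z)]
    omega
  have hwy : w ∈ T.branch z y := by
    rw [mem_branch, dist_comm (u := y), dist_comm (u := z)]
    omega
  obtain rfl := hT.eq_of_mem_branch hzy hzy' hwy hwy'
  rw [mem_branch, dist_comm (u := y), dist_comm (u := z)] at hby'
  omega

lemma mem_support_of_mem_branch_of_notMem_branch (hb : T.Adj w b) (p : T.Walk x y)
    (hx : x ∈ T.branch w b) (hy : y ∉ T.branch w b) : w ∈ p.support := by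
  induction p with
  | nil => exact absurd hx hy
  | @cons x x' y hxx' q ih =>
    rw [Walk.support_cons, List.mem_cons]
    by_cases hx' : x' ∈ T.branch w b
    · exact Or.inr (ih hx' hy)
    · exact Or.inr (hT.eq_of_adj_of_notMem_branch hb hx hxx' hx' ▸ q.start_mem_support)

lemma dist_eq_dist_add_dist_of_mem_branch (hb : T.Adj w b) (hx : x ∈ T.branch w b)
    (hy : y ∉ T.branch w b) : T.dist x y = T.dist x w + T.dist w y := by
  obtain ⟨p, hp, -⟩ := hT.connected.exists_path_of_dist x y
  exact ((hT.mem_support_iff_dist_add_dist hp).1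
    (hT.mem_support_of_mem_branch_of_notMem_branch hb p hx hy)).symm

lemma exists_isEndVertex_mem_branch [Finite V] (hb : T.Adj w b) :
    ∃ ℓ ∈ T.branch w b, IsEndVertex T ℓ := by
  obtain ⟨ℓ, hℓ, hmax⟩ := Set.exists_max_image (T.branch w b) (T.dist w) (Set.toFinite _)
    ⟨b, mem_branch_of_adj hb⟩
  refine ⟨ℓ, hℓ, ?_⟩
  have hℓw : ℓ ≠ w := fun h => notMem_branch_self (h ▸ hℓ)
  obtain ⟨n, hn, hwn⟩ := hT.connected.exists_adj_mem_branch hℓw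
  refine isEndVertex_of_forall_adj_eq hn fun y hy => ?_
  by_contra hyn
  -- any other neighbour `y` of `ℓ` would be further from `w` and still in the branch
  have hwy : w ∉ T.branch ℓ y := fun hwy => hyn (hT.eq_of_mem_branch hy hn hwy hwn)
  have hdy := hT.dist_eq_add_one_of_notMem_branch hy hwy
  have hyb : y ∈ T.branch w b := by
    by_contra hyb
    obtain rfl := hT.eq_of_adj_of_notMem_branch hb hℓ hy hyb
    rw [dist_self] at hdy
    omega
  have := hmax y hyb
  rw [dist_comm (u := y), dist_comm (u := ℓ)] at hdy
  omega

lemma isExteriorMajor_of_forall_dist_le [Finite V] (hw : IsMajorVertex T w)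
    (hmax : ∀ u, IsMajorVertex T u → T.dist c u ≤ T.dist c w) : IsExteriorMajor T w := by
  obtain ⟨b, hb, hcb⟩ : ∃ b, T.Adj w b ∧ c ∉ T.branch w b := by
    obtain ⟨b₁, hb₁, b₂, hb₂, hne⟩ := (Set.one_lt_ncard (Set.toFinite _)).1
      (by unfold IsMajorVertex deg at hw; omega : 1 < (T.neighborSet w).ncard)
    by_cases hc : c ∈ T.branch w b₁
    · exact ⟨b₂, hb₂, fun hc' => hne (hT.eq_of_mem_branch hb₁ hb₂ hc hc')⟩
    · exact ⟨b₁, hb₁, hc⟩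
  obtain ⟨ℓ, hℓ, hend⟩ := hT.exists_isEndVertex_mem_branch hb
  refine ⟨hw, ℓ, hend, hw, fun u hu huw => ?_⟩
  have hpos := hT.connected.pos_dist_of_ne huw.symm
  have hub : u ∉ T.branch w b := fun hub => by
    have hsplit := hT.dist_eq_dist_add_dist_of_mem_branch hb hub hcb
    have := hmax u hu
    rw [dist_comm (u := u), dist_comm (u := u), dist_comm (u := w) (v := c)] at hsplit
    omega
  have := hT.dist_eq_dist_add_dist_of_mem_branch hb hℓ hub
  omega

lemma eq_of_isMajorVertex [Finite V] (hc : {v | IsExteriorMajor T v} = {c})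
    (hw : IsMajorVertex T w) : w = c := by
  obtain ⟨u, hu, hmax⟩ := Set.exists_max_image {v | IsMajorVertex T v} (T.dist c)
    (Set.toFinite _) ⟨w, hw⟩
  have huc : u ∈ ({c} : Set V) := hc ▸ hT.isExteriorMajor_of_forall_dist_le hu hmax
  obtain rfl : u = c := huc
  have := hmax w hw
  rw [dist_self, Nat.le_zero] at this
  exact ((hT.connected.dist_eq_zero_iff).1 this).symm

lemma exists_adj_mem_branch_of_mem_branch (hb : T.Adj w b) (hx : x ∈ T.branch w b)
    (hxb : x ≠ b) : ∃ x', T.Adj x x' ∧ w ∈ T.branch x x' ∧ x' ∈ T.branch w b := by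
  have hxw : x ≠ w := fun h => notMem_branch_self (h ▸ hx)
  obtain ⟨x', hxx', hwx'⟩ := hT.connected.exists_adj_mem_branch hxw
  refine ⟨x', hxx', hwx', by_contra fun hx' => hxb ?_⟩
  obtain rfl := hT.eq_of_adj_of_notMem_branch hb hx hxx' hx'
  rw [mem_branch, dist_self, zero_add, dist_comm] at hwx'
  rw [mem_branch, ← hwx'] at hx
  exact (hT.connected.dist_eq_zero_iff.1 (by omega)).symm

lemma eq_of_mem_branch_of_dist_eq [Finite V] (hdeg : ∀ x, x ≠ c → deg T x ≤ 2)
    (hb : T.Adj c b) (hx : x ∈ T.branch c b) (hy : y ∈ T.branch c b)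
    (hxy : T.dist c x = T.dist c y) : x = y := by
  obtain ⟨n, hn⟩ : ∃ n, T.dist c x = n := ⟨_, rfl⟩
  induction n generalizing x y with
  | zero => rw [mem_branch] at hx; omega
  | succ n ih =>
    have hbranch_b : ∀ v ∈ T.branch c b, T.dist c v = 1 → v = b := fun v hv h1 => by
      rw [mem_branch] at hv
      exact (hT.connected.dist_eq_zero_iff.1 (by omega)).symm
    by_cases hn0 : n = 0
    · subst hn0
      rw [hbranch_b x hx hn, hbranch_b y hy (hxy ▸ hn)]
    have hxb : x ≠ b := fun h => by rw [h, dist_eq_one_iff_adj.2 hb] at hn; omega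
    have hyb : y ≠ b := fun h => by rw [h, dist_eq_one_iff_adj.2 hb] at hxy; omega
    obtain ⟨x', hxx', hcx', hx'⟩ := hT.exists_adj_mem_branch_of_mem_branch hb hx hxb
    obtain ⟨y', hyy', hcy', hy'⟩ := hT.exists_adj_mem_branch_of_mem_branch hb hy hyb
    rw [mem_branch, dist_comm (u := x'), dist_comm (u := x)] at hcx'
    rw [mem_branch, dist_comm (u := y'), dist_comm (u := y)] at hcy'
    obtain rfl : x' = y' := ih hx' hy' (by omega) (by omega)
    -- otherwise `x'` would have three neighbours: `x`, `y` and its neighbour towards `c`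
    by_contra hne
    have hx'c : x' ≠ c := fun h => notMem_branch_self (h ▸ hx')
    obtain ⟨p, hx'p, hcp⟩ := hT.connected.exists_adj_mem_branch hx'c
    rw [mem_branch, dist_comm (u := p), dist_comm (u := x')] at hcp
    have hpx : p ≠ x := fun h => by subst h; omega
    have hpy : p ≠ y := fun h => by subst h; omega
    have := three_le_deg hx'p hxx'.symm hyy'.symm hpx hpy hne
    have := hdeg x' hx'c
    omega

lemma isConnResolving_insert_neighborSet_diff [Finite V] (hdeg : ∀ x, x ≠ c → deg T x ≤ 2)
    {b₀ : V} : IsConnResolving T (insert c (T.neighborSet c \ {b₀})) := by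
  refine ⟨fun x y hxy => ?_, connected_induce_insert_of_subset_neighborSet Set.sdiff_subset⟩
  by_cases hd : T.dist c x = T.dist c y
  swap
  · exact ⟨c, Set.mem_insert c _, hd⟩
  have hxc : x ≠ c := by
    rintro rfl
    rw [dist_self] at hd
    exact hxy (hT.connected.dist_eq_zero_iff.1 hd.symm)
  have hyc : y ≠ c := by
    rintro rfl
    rw [dist_self] at hd
    exact hxy (hT.connected.dist_eq_zero_iff.1 hd).symm
  have key : ∀ {b u v}, T.Adj c b → u ∈ T.branch c b → v ∉ T.branch c b →
      T.dist c u = T.dist c v → T.dist b u ≠ T.dist b v := fun hb hu hv huv => by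
    have := hT.dist_eq_add_one_of_notMem_branch hb hv
    rw [mem_branch] at hu
    omega
  obtain ⟨b₁, hb₁, hx₁⟩ := hT.connected.exists_adj_mem_branch hxc.symm
  obtain ⟨b₂, hb₂, hy₂⟩ := hT.connected.exists_adj_mem_branch hyc.symm
  have hy₁ : y ∉ T.branch c b₁ := fun h => hxy (hT.eq_of_mem_branch_of_dist_eq hdeg hb₁ hx₁ h hd)
  have hx₂ : x ∉ T.branch c b₂ := fun h => hxy (hT.eq_of_mem_branch_of_dist_eq hdeg hb₂ h hy₂ hd)
  by_cases hb₁₀ : b₁ = b₀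
  · refine ⟨b₂, Or.inr ⟨hb₂, fun h => hy₁ ?_⟩, (key hb₂ hy₂ hx₂ hd.symm).symm⟩
    rwa [hb₁₀, ← h]
  · exact ⟨b₁, Or.inr ⟨hb₁, hb₁₀⟩, key hb₁ hx₁ hy₁ hd⟩

lemma eq_of_disjoint_branch (hS : IsResolving T S) (hb : T.Adj c b) (hb' : T.Adj c b')
    (h : Disjoint S (T.branch c b)) (h' : Disjoint S (T.branch c b')) : b = b' := by
  by_contra hne
  obtain ⟨z, hzS, hz⟩ := hS b b' hne
  have := hT.dist_eq_add_one_of_notMem_branch hb (h.notMem_of_mem_left hzS)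
  have := hT.dist_eq_add_one_of_notMem_branch hb' (h'.notMem_of_mem_left hzS)
  rw [dist_comm (u := z), dist_comm (u := z)] at hz
  omega

lemma mem_of_connected_induce_of_mem_branch (hS : (T.induce S).Connected) (hb : T.Adj c b) (hx : x ∈ S)
    (hxb : x ∈ T.branch c b) (hy : y ∈ S) (hyb : y ∉ T.branch c b) : c ∈ S := by
  obtain ⟨q⟩ := hS.preconnected ⟨x, hx⟩ ⟨y, hy⟩
  have := hT.mem_support_of_mem_branch_of_notMem_branch hb (q.map (Embedding.induce S).toHom)
    hxb hyb
  rw [Walk.support_map, List.mem_map] at this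
  obtain ⟨⟨v, hv⟩, -, rfl⟩ := this
  exact hv

lemma ncard_setOf_adj_not_disjoint_branch_le [Finite V] (S : Set V) :
    {b | T.Adj c b ∧ ¬ Disjoint S (T.branch c b)}.ncard ≤ (S \ {c}).ncard := by
  choose! f hf using fun b (hb : b ∈ {b | T.Adj c b ∧ ¬ Disjoint S (T.branch c b)}) =>
    Set.not_disjoint_iff.1 hb.2
  refine Set.ncard_le_ncard_of_injOn f (fun b hb => ⟨(hf b hb).1, ?_⟩) (fun b hb b' hb' he => ?_)
  · exact fun h => notMem_branch_self ((Set.mem_singleton_iff.1 h) ▸ (hf b hb).2)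
  · exact hT.eq_of_mem_branch hb.1 hb'.1 (hf b hb).2 (he ▸ (hf b' hb').2)

lemma deg_le_ncard_of_isConnResolving [Finite V] (hc : IsMajorVertex T c)
    (hS : IsConnResolving T S) : deg T c ≤ S.ncard := by
  set N := {b | T.Adj c b ∧ ¬ Disjoint S (T.branch c b)}
  have hN : deg T c ≤ N.ncard + 1 := by
    have hsub : (T.neighborSet c \ N).Subsingleton := fun b hb b' hb' =>
      hT.eq_of_disjoint_branch hS.1 hb.1 hb'.1 (by_contra fun h => hb.2 ⟨hb.1, h⟩)
        (by_contra fun h => hb'.2 ⟨hb'.1, h⟩)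
    have := Set.ncard_sdiff_add_ncard_of_subset (s := N) (t := T.neighborSet c) fun b hb => hb.1
    have := Set.ncard_le_one_iff_subsingleton.2 hsub
    unfold deg
    omega
  have hcS : c ∈ S := by
    obtain ⟨b₁, hb₁, b₂, hb₂, hne⟩ := (Set.one_lt_ncard (Set.toFinite N)).1
      (by unfold IsMajorVertex at hc; omega)
    obtain ⟨x, hxS, hx⟩ := Set.not_disjoint_iff.1 hb₁.2
    obtain ⟨y, hyS, hy⟩ := Set.not_disjoint_iff.1 hb₂.2
    exact hT.mem_of_connected_induce_of_mem_branch hS.2 hb₁.1 hxS hx hyS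
      fun hy' => hne (hT.eq_of_mem_branch hb₁.1 hb₂.1 hy' hy)
  have hNS : N.ncard ≤ (S \ {c}).ncard := hT.ncard_setOf_adj_not_disjoint_branch_le S
  rw [Set.ncard_sdiff_singleton_of_mem hcS] at hNS
  have := Set.ncard_ne_zero_of_mem hcS
  omega

lemma cdim_eq_deg [Finite V] (hc : IsMajorVertex T c) (hdeg : ∀ x, x ≠ c → deg T x ≤ 2) :
    cdim T = deg T c := by
  obtain ⟨b₀, hb₀⟩ : (T.neighborSet c).Nonempty :=
    (Set.ncard_pos (Set.toFinite _)).1 (by unfold IsMajorVertex deg at hc; omega)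
  have hcard : (insert c (T.neighborSet c \ {b₀})).ncard = deg T c := by
    rw [Set.ncard_insert_of_notMem (fun h => T.irrefl h.1),
      Set.ncard_sdiff_singleton_of_mem hb₀, deg]
    have := Set.ncard_pos (Set.toFinite _) |>.2 ⟨b₀, hb₀⟩
    omega
  have hS := hT.isConnResolving_insert_neighborSet_diff hdeg (b₀ := b₀)
  refine le_antisymm (Nat.sInf_le ⟨_, hS, hcard⟩) (le_csInf ⟨_, _, hS, hcard⟩ ?_)
  rintro n ⟨S, hS, rfl⟩
  exact hT.deg_le_ncard_of_isConnResolving hc hS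

-- Handshake: `∑ deg = 2 (|V| - 1)`, while every vertex other than `c` has degree `2`,
-- except the end vertices, of degree `1`.
lemma ncard_isEndVertex_eq_deg [Fintype V] (hc : 2 ≤ deg T c)
    (hdeg : ∀ x, x ≠ c → deg T x ≤ 2) : {v | IsEndVertex T v}.ncard = deg T c := by
  classical
  have hdegree : ∀ v, deg T v = T.degree v := fun v => by
    rw [deg, ← Nat.card_coe_set_eq, Nat.card_eq_fintype_card, card_neighborSet_eq_degree]
  simp only [hdegree] at hc hdeg ⊢
  obtain ⟨b, hb⟩ := (T.degree_pos_iff_exists_adj c).1 (by omega)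
  have : Nontrivial V := ⟨⟨c, b, hb.ne⟩⟩
  have hpos := hT.connected.preconnected.degree_pos_of_nontrivial
  have hvert : ∀ v, T.degree v + (if IsEndVertex T v then 1 else 0) =
      2 + if v = c then T.degree c - 2 else 0 := by
    intro v
    have := hpos v
    simp only [IsEndVertex, hdegree]
    by_cases hv : v = c
    · subst hv
      rw [if_pos rfl]
      split_ifs <;> omega
    · have := hdeg v hv
      split_ifs <;> omega
  have hsum := Finset.sum_congr rfl fun v (_ : v ∈ Finset.univ) => hvert v
  rw [Finset.sum_add_distrib, Finset.sum_add_distrib, sum_degrees_eq_twice_card_edges,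
    Finset.sum_boole, Finset.sum_ite_eq', if_pos (Finset.mem_univ c)] at hsum
  have hedges := hT.card_edgeFinset
  simp only [Finset.sum_const, Finset.card_univ, smul_eq_mul, Nat.cast_id] at hsum
  rw [Set.ncard_eq_toFinset_card', Set.toFinset_ofPred]
  convert (by omega : (Finset.univ.filter fun v => IsEndVertex T v).card = T.degree c)

end IsTree

end SimpleGraph

/-- For a finite tree `T` with exactly one exterior major vertex,
`cdim(T) = σ(T)`, the number of end vertices of `T`. -/
theorem stmt_11 {V : Type*} [Fintype V] (T : SimpleGraph V) (hT : T.IsTree)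
    (hex : {v : V | IsExteriorMajor T v}.ncard = 1) :
    cdim T = {v : V | IsEndVertex T v}.ncard := by
  obtain ⟨c, hc⟩ := Set.ncard_eq_one.1 hex
  have hcmaj : IsMajorVertex T c := (hc ▸ Set.mem_singleton c : c ∈ {v | IsExteriorMajor T v}).1
  have hdeg : ∀ x, x ≠ c → deg T x ≤ 2 := fun x hx => by
    by_contra h
    exact hx (hT.eq_of_isMajorVertex hc (by unfold IsMajorVertex; omega))
  rw [hT.cdim_eq_deg hcmaj hdeg,
    hT.ncard_isEndVertex_eq_deg (by unfold IsMajorVertex at hcmaj; omega) hdeg]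
end

section
/- Let P be the Petersen graph. Then cdim(P) = 4, and moreover cdim_P(v) = 4 for every vertex v of P. -/
/-!
The Petersen graph has diameter 2, so `d(z, x)` is `0`, `1` or `2` according as `z = x`, `z` is
adjacent to `x`, or neither; resolvability of a given vertex set is therefore a finite check.
In a connected set of at least two vertices every vertex has a neighbour inside the set, whereas
every resolving set of at most three vertices has a vertex with no neighbour in it; hence
`cdim ≥ 4`. Conversely every vertex is the end of a path on four vertices that resolves the
graph.
-/

open SimpleGraph

variable {V : Type*}

/-- The Petersen graph: vertices are the 2-element subsets of a 5-element set, with two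
vertices adjacent iff the corresponding subsets are disjoint. -/
def petersen : SimpleGraph {s : Finset (Fin 5) // s.card = 2} where
  Adj a b := Disjoint a.1 b.1
  symm := ⟨fun a b h => h.symm⟩
  loopless := ⟨fun a h => by
    simp only [disjoint_self, Finset.bot_eq_empty] at h
    have h2 := a.2
    rw [h] at h2
    simp at h2⟩

section General

variable {G : SimpleGraph V}

lemma exists_adj_mem_of_connected_induce {S : Set V} (hS : (G.induce S).Connected) {u v : V}
    (hu : u ∈ S) (hv : v ∈ S) (huv : u ≠ v) : ∃ w ∈ S, G.Adj u w := by
  obtain ⟨p⟩ := hS.preconnected ⟨u, hu⟩ ⟨v, hv⟩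
  cases p with
  | nil => exact absurd rfl huv
  | cons hadj _ => exact ⟨_, Subtype.prop _, hadj⟩

lemma cdimAt_eq_of_ncard_le {v : V} {k : ℕ} (hlow : ∀ S, IsConnResolving G S → k ≤ S.ncard)
    {S : Set V} (hS : IsConnResolving G S) (hv : v ∈ S) (hk : S.ncard ≤ k) :
    cdimAt G v = k :=
  le_antisymm ((Nat.sInf_le ⟨S, hS, hv, rfl⟩ : cdimAt G v ≤ S.ncard).trans hk) <|
    le_csInf ⟨_, S, hS, hv, rfl⟩ <| by rintro _ ⟨T, hT, -, rfl⟩; exact hlow T hT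

lemma cdim_eq_of_ncard_le {k : ℕ} (hlow : ∀ S, IsConnResolving G S → k ≤ S.ncard)
    {S : Set V} (hS : IsConnResolving G S) (hk : S.ncard ≤ k) :
    cdim G = k :=
  le_antisymm ((Nat.sInf_le ⟨S, hS, rfl⟩ : cdim G ≤ S.ncard).trans hk) <|
    le_csInf ⟨_, S, hS, rfl⟩ <| by rintro _ ⟨T, hT, rfl⟩; exact hlow T hT

end General

abbrev PetersenVertex := {s : Finset (Fin 5) // s.card = 2}

instance : DecidableRel petersen.Adj := fun a b => inferInstanceAs (Decidable (Disjoint a.1 b.1))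

lemma petersen_exists_common_neighbor : ∀ a b : PetersenVertex, a ≠ b → ¬ petersen.Adj a b →
    ∃ c, petersen.Adj a c ∧ petersen.Adj c b := by
  decide

lemma petersen_dist (a b : PetersenVertex) :
    petersen.dist a b = if a = b then 0 else if petersen.Adj a b then 1 else 2 := by
  split_ifs with hab hadj
  · rw [hab, dist_self]
  · exact dist_eq_one_iff_adj.mpr hadj
  · obtain ⟨c, hac, hcb⟩ := petersen_exists_common_neighbor a b hab hadj
    let p : petersen.Walk a b := .cons hac (.cons hcb .nil)
    have hle : petersen.dist a b ≤ 2 := dist_le p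
    have hpos : 0 < petersen.dist a b := Reachable.pos_dist_of_ne ⟨p⟩ hab
    have hne : petersen.dist a b ≠ 1 := fun h => hadj (dist_eq_one_iff_adj.mp h)
    omega

instance (T : Finset PetersenVertex) : Decidable (IsResolving petersen ↑T) :=
  decidable_of_iff (∀ x y : PetersenVertex, x ≠ y → ∃ z ∈ T,
      (if z = x then 0 else if petersen.Adj z x then 1 else 2) ≠
        (if z = y then 0 else if petersen.Adj z y then 1 else 2)) <| by
    simp only [IsResolving, petersen_dist, Finset.mem_coe]

set_option maxRecDepth 100000 in
lemma petersen_exists_isolated_of_isResolving :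
    ∀ T : Finset PetersenVertex, T.card ≤ 3 → IsResolving petersen ↑T →
      ∃ u ∈ T, ∃ v ∈ T, u ≠ v ∧ ∀ w ∈ T, ¬ petersen.Adj u w := by
  decide

set_option maxRecDepth 100000 in
lemma petersen_exists_resolving_path : ∀ a : PetersenVertex, ∃ b c e,
    petersen.Adj a b ∧ petersen.Adj b c ∧ petersen.Adj c e ∧
      IsResolving petersen ↑({a, b, c, e} : Finset PetersenVertex) := by
  decide

lemma petersen_four_le_ncard {S : Set PetersenVertex} (hS : IsConnResolving petersen S) :
    4 ≤ S.ncard := by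
  by_contra! hcard
  have hfin := S.toFinite
  rw [Set.ncard_eq_toFinset_card S hfin] at hcard
  obtain ⟨u, hu, v, hv, huv, hisolated⟩ := petersen_exists_isolated_of_isResolving
    hfin.toFinset (by omega) (by rw [Set.Finite.coe_toFinset]; exact hS.1)
  rw [Set.Finite.mem_toFinset] at hu hv
  obtain ⟨w, hw, huw⟩ := exists_adj_mem_of_connected_induce hS.2 hu hv huv
  exact hisolated w (hfin.mem_toFinset.mpr hw) huw

lemma petersen_exists_isConnResolving (a : PetersenVertex) :
    ∃ S, IsConnResolving petersen S ∧ a ∈ S ∧ S.ncard ≤ 4 := by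
  obtain ⟨b, c, e, hab, hbc, hce, hres⟩ := petersen_exists_resolving_path a
  let p : petersen.Walk a e := .cons hab (.cons hbc (.cons hce .nil))
  have hsupport : {x | x ∈ p.support} = ↑({a, b, c, e} : Finset PetersenVertex) := by
    ext; simp [p]
  refine ⟨_, ⟨hres, hsupport ▸ p.connected_induce_support⟩, by simp, ?_⟩
  rw [Set.ncard_coe_finset]
  exact Finset.card_le_four

/-- For the Petersen graph `P`, `cdim(P) = 4` and `cdim_P(v) = 4`
for every vertex `v`. -/
theorem stmt_13 :
    cdim petersen = 4 ∧ ∀ v, cdimAt petersen v = 4 := by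
  obtain ⟨S, hS, -, hcard⟩ := petersen_exists_isConnResolving ⟨{0, 1}, rfl⟩
  refine ⟨cdim_eq_of_ncard_le (fun _ => petersen_four_le_ncard) hS hcard, fun v => ?_⟩
  obtain ⟨S, hS, hv, hcard⟩ := petersen_exists_isConnResolving v
  exact cdimAt_eq_of_ncard_le (fun _ => petersen_four_le_ncard) hS hv hcard
end

section
/- For k ≥ 2, let G = K_{a_1, a_2, ..., a_k} be the complete k-partite graph of order n = a_1 + a_2 + ... + a_k ≥ 4 (each a_i ≥ 1), and let s be the number of partite sets of G consisting of exactly one element. Then cdim(G) = n − 1 if s = 1 and k = 2; cdim(G) = n − k if s = 0; and cdim(G) = n + s − k − 1 otherwise. -/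
/-!
In a complete multipartite graph whose parts are nonempty and at least two in number, `d(x, y)`
is `0`, `1` or `2` according as `x = y`, `x` and `y` lie in different parts, or `x ≠ y` lie in the
same part. Hence `S` is resolving iff `Sᶜ` contains at most one vertex of each part and at most
one part misses `S` entirely, and for `|S| ≥ 2` the subgraph induced on `S` is connected iff `S`
meets two parts. So `cdim = n - max |Sᶜ|`, where `Sᶜ` may be taken to be one vertex from each
part in a set `J` of parts containing at most one singleton part and leaving two parts met by `S`:
all parts if `s = 0`, the non-singleton parts if `k = 2` and `s = 1`, and the non-singleton parts
together with one singleton part otherwise (where `n ≥ 4` forces `k ≥ 3`).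
-/

open SimpleGraph

variable {V : Type*}

theorem cdim_eq_card_sub [Finite V] {G : SimpleGraph V} {S₀ : Set V} {m : ℕ}
    (hS₀ : IsConnResolving G S₀) (hm : S₀ᶜ.ncard = m)
    (h : ∀ S, IsConnResolving G S → Sᶜ.ncard ≤ m) : cdim G = Nat.card V - m := by
  have hcard (S : Set V) : S.ncard = Nat.card V - Sᶜ.ncard := by
    rw [← Set.ncard_add_ncard_compl S]; omega
  refine IsLeast.csInf_eq ⟨⟨S₀, hS₀, by rw [hcard, hm]⟩, ?_⟩
  rintro _ ⟨S, hS, rfl⟩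
  have := h S hS
  rw [hcard]
  omega

namespace SimpleGraph.completeMultipartiteGraph

variable {ι : Type*} {W : ι → Type*}

theorem induce_connected_of_nontrivial_image_fst {S : Set (Σ i, W i)}
    (h : (Sigma.fst '' S).Nontrivial) : ((completeMultipartiteGraph W).induce S).Connected := by
  obtain ⟨_, ⟨u, hu, rfl⟩, _, ⟨v, hv, rfl⟩, huv⟩ := h
  have hadj (p q : S) (h : p.1.1 ≠ q.1.1) :
      ((completeMultipartiteGraph W).induce S).Adj p q := h
  have hreach (p : S) : ((completeMultipartiteGraph W).induce S).Reachable ⟨u, hu⟩ p := by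
    by_cases hp : u.1 = p.1.1
    · exact (hadj ⟨u, hu⟩ ⟨v, hv⟩ huv).reachable.trans
        (hadj ⟨v, hv⟩ p (hp ▸ Ne.symm huv)).reachable
    · exact (hadj _ _ hp).reachable
  have : Nonempty S := ⟨⟨u, hu⟩⟩
  exact ⟨fun p q => (hreach p).symm.trans (hreach q)⟩

theorem nontrivial_image_fst_of_induce_connected {S : Set (Σ i, W i)}
    (hS : ((completeMultipartiteGraph W).induce S).Connected) (hS' : S.Nontrivial) :
    (Sigma.fst '' S).Nontrivial := by
  obtain ⟨x, hx, y, hy, hxy⟩ := hS'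
  obtain ⟨w⟩ := hS.preconnected ⟨x, hx⟩ ⟨y, hy⟩
  cases w with
  | nil => exact absurd rfl hxy
  | cons h _ =>
    exact ⟨_, Set.mem_image_of_mem _ hx, _, Set.mem_image_of_mem _ (Subtype.prop _), h⟩

section Transversal

variable (c : ∀ i, W i) (J : Set ι)

theorem ncard_image_mk : ((fun i => (⟨i, c i⟩ : Σ i, W i)) '' J).ncard = J.ncard :=
  Set.ncard_image_of_injective J fun _ _ h => congrArg Sigma.fst h

theorem compl_image_fst_compl_image_mk :
    (Sigma.fst '' ((fun i => (⟨i, c i⟩ : Σ i, W i)) '' J)ᶜ)ᶜ =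
      J ∩ {i | Subsingleton (W i)} := by
  ext i
  suffices (∀ x : W i, i ∈ J ∧ c i = x) ↔ i ∈ J ∧ Subsingleton (W i) by simpa
  refine ⟨fun h => ⟨(h (c i)).1, ⟨fun x y => (h x).2.symm.trans (h y).2⟩⟩, ?_⟩
  rintro ⟨hi, hsing⟩ x
  exact ⟨hi, hsing.elim _ _⟩

end Transversal

variable [Nontrivial ι] [∀ i, Nonempty (W i)]

open Classical in
theorem dist_eq (x y : Σ i, W i) :
    (completeMultipartiteGraph W).dist x y = if x = y then 0 else if x.1 = y.1 then 2 else 1 := by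
  split_ifs with hxy hfst
  · simp [hxy]
  · obtain ⟨j, hj⟩ := exists_ne x.1
    let z : Σ i, W i := ⟨j, Classical.arbitrary _⟩
    have hxz : (completeMultipartiteGraph W).Adj x z := Ne.symm hj
    have hzy : (completeMultipartiteGraph W).Adj z y := fun h => hj (h.trans hfst.symm)
    have hle : (completeMultipartiteGraph W).dist x y ≤ 2 := by
      simpa using dist_le (hxz.toWalk.append hzy.toWalk)
    have hne0 : (completeMultipartiteGraph W).dist x y ≠ 0 :=
      ((hxz.reachable.trans hzy.reachable).dist_eq_zero_iff).not.mpr hxy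
    have hne1 : (completeMultipartiteGraph W).dist x y ≠ 1 :=
      dist_eq_one_iff_adj.not.mpr (not_not.mpr hfst)
    omega
  · exact dist_eq_one_iff_adj.mpr hfst

theorem isResolving_iff {S : Set (Σ i, W i)} :
    IsResolving (completeMultipartiteGraph W) S ↔
      Set.InjOn Sigma.fst Sᶜ ∧ (Sigma.fst '' S)ᶜ.Subsingleton := by
  simp only [IsResolving, dist_eq]
  constructor
  · intro h
    refine ⟨fun x hx y hy hfst => ?_, fun i hi j hj => ?_⟩
    · by_contra hxy
      obtain ⟨z, hz, hd⟩ := h x y hxy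
      have hzx : z ≠ x := fun h => hx (h ▸ hz)
      have hzy : z ≠ y := fun h => hy (h ▸ hz)
      exact hd (by rw [if_neg hzx, if_neg hzy, hfst])
    · by_contra hij
      obtain ⟨z, hz, hd⟩ := h ⟨i, Classical.arbitrary _⟩ ⟨j, Classical.arbitrary _⟩
        (fun h => hij (congrArg Sigma.fst h))
      have hzi : z.1 ≠ i := fun h => hi ⟨z, hz, h⟩
      have hzj : z.1 ≠ j := fun h => hj ⟨z, hz, h⟩
      have hzi' : z ≠ ⟨i, Classical.arbitrary _⟩ := fun h => hzi (h ▸ rfl)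
      have hzj' : z ≠ ⟨j, Classical.arbitrary _⟩ := fun h => hzj (h ▸ rfl)
      simp_all
  · rintro ⟨hinj, hsub⟩ x y hxy
    by_cases hfst : x.1 = y.1
    · by_cases hx : x ∈ S
      · exact ⟨x, hx, by simp [hxy, hfst]⟩
      · have hy : y ∈ S := by_contra fun hy => hxy (hinj hx hy hfst)
        exact ⟨y, hy, by simp [Ne.symm hxy, hfst]⟩
    · have hmeet : x.1 ∈ Sigma.fst '' S ∨ y.1 ∈ Sigma.fst '' S := by
        by_contra h
        push Not at h
        exact hfst (hsub h.1 h.2)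
      rcases hmeet with ⟨z, hz, hzx⟩ | ⟨z, hz, hzy⟩
      · refine ⟨z, hz, ?_⟩
        split_ifs <;> simp_all
      · refine ⟨z, hz, ?_⟩
        split_ifs <;> simp_all

theorem isConnResolving_compl_image_mk (c : ∀ i, W i) (J : Set ι)
    (h₁ : (J ∩ {i | Subsingleton (W i)}).Subsingleton)
    (h₂ : (J ∩ {i | Subsingleton (W i)})ᶜ.Nontrivial) :
    IsConnResolving (completeMultipartiteGraph W)
      ((fun i => (⟨i, c i⟩ : Σ i, W i)) '' J)ᶜ := by
  have hinj : Set.InjOn Sigma.fst ((fun i => (⟨i, c i⟩ : Σ i, W i)) '' J) := by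
    rintro _ ⟨i, -, rfl⟩ _ ⟨j, -, rfl⟩ (rfl : i = j)
    rfl
  refine ⟨isResolving_iff.mpr ⟨by rwa [compl_compl], ?_⟩,
    induce_connected_of_nontrivial_image_fst ?_⟩
  · rwa [compl_image_fst_compl_image_mk]
  · rwa [← compl_compl (Sigma.fst '' _), compl_image_fst_compl_image_mk]

variable [Finite ι]

theorem ncard_compl_le_of_isResolving {S : Set (Σ i, W i)}
    (hS : IsResolving (completeMultipartiteGraph W) S) : Sᶜ.ncard ≤ Nat.card ι := by
  rw [← (isResolving_iff.mp hS).1.ncard_image]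
  exact Set.ncard_le_card _

theorem ncard_compl_add_ncard_le_of_isResolving {S : Set (Σ i, W i)}
    (hS : IsResolving (completeMultipartiteGraph W) S) :
    Sᶜ.ncard + {i | Subsingleton (W i)}.ncard ≤ Nat.card ι + (Sigma.fst '' S)ᶜ.ncard := by
  have hinj := (isResolving_iff.mp hS).1
  have hsub : Sigma.fst '' Sᶜ ∩ {i | Subsingleton (W i)} ⊆ (Sigma.fst '' S)ᶜ := by
    rintro _ ⟨⟨⟨i, b⟩, hb, rfl⟩, hsing⟩ ⟨⟨j, c⟩, hc, rfl⟩
    have : Subsingleton (W j) := hsing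
    exact hb (Subsingleton.elim c b ▸ hc)
  calc Sᶜ.ncard + {i | Subsingleton (W i)}.ncard
      = (Sigma.fst '' Sᶜ).ncard + {i | Subsingleton (W i)}.ncard := by rw [hinj.ncard_image]
    _ = (Sigma.fst '' Sᶜ ∪ {i | Subsingleton (W i)}).ncard +
          (Sigma.fst '' Sᶜ ∩ {i | Subsingleton (W i)}).ncard :=
        (Set.ncard_union_add_ncard_inter _ _).symm
    _ ≤ Nat.card ι + (Sigma.fst '' S)ᶜ.ncard :=
        add_le_add (Set.ncard_le_card _) (Set.ncard_le_ncard hsub)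

variable [∀ i, Finite (W i)]

theorem cdim_eq_card_sub_ncard (J : Set ι) (h₁ : (J ∩ {i | Subsingleton (W i)}).Subsingleton)
    (h₂ : (J ∩ {i | Subsingleton (W i)})ᶜ.Nontrivial)
    (h : ∀ S, IsConnResolving (completeMultipartiteGraph W) S → Sᶜ.ncard ≤ J.ncard) :
    cdim (completeMultipartiteGraph W) = Nat.card (Σ i, W i) - J.ncard :=
  cdim_eq_card_sub (isConnResolving_compl_image_mk (Classical.arbitrary _) J h₁ h₂)
    (by rw [compl_compl, ncard_image_mk]) h

theorem cdim_eq_of_ncard_subsingleton_eq_zero (hs : {i | Subsingleton (W i)}.ncard = 0) :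
    cdim (completeMultipartiteGraph W) = Nat.card (Σ i, W i) - Nat.card ι := by
  rw [Set.ncard_eq_zero] at hs
  have hJ : Set.univ ∩ {i | Subsingleton (W i)} = ∅ := by rw [Set.univ_inter, hs]
  rw [← Set.ncard_univ ι]
  refine cdim_eq_card_sub_ncard _ (hJ ▸ Set.subsingleton_empty) ?_ fun S hS => ?_
  · rw [hJ, Set.compl_empty]
    exact Set.nontrivial_univ
  · exact (ncard_compl_le_of_isResolving hS.1).trans_eq (Set.ncard_univ ι).symm

theorem cdim_eq_of_three_le (hs : {i | Subsingleton (W i)}.Nonempty) (hk : 3 ≤ Nat.card ι) :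
    cdim (completeMultipartiteGraph W) =
      Nat.card (Σ i, W i) - (Nat.card ι - {i | Subsingleton (W i)}.ncard + 1) := by
  obtain ⟨i₀, hi₀⟩ := hs
  have hJs : insert i₀ {i | Subsingleton (W i)}ᶜ ∩ {i | Subsingleton (W i)} = {i₀} := by
    rw [Set.insert_inter_of_mem hi₀, Set.compl_inter_self, insert_empty_eq]
  have hJ : (insert i₀ {i | Subsingleton (W i)}ᶜ).ncard =
      Nat.card ι - {i | Subsingleton (W i)}.ncard + 1 := by
    rw [Set.ncard_insert_of_notMem (not_not.mpr hi₀)]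
    have := Set.ncard_add_ncard_compl {i | Subsingleton (W i)}
    omega
  rw [← hJ]
  refine cdim_eq_card_sub_ncard _ (by simp [hJs]) ?_ fun S hS => ?_
  · rw [hJs, ← Set.one_lt_ncard_iff_nontrivial]
    have := Set.ncard_add_ncard_compl {i₀}
    rw [Set.ncard_singleton] at this
    omega
  · have := ncard_compl_add_ncard_le_of_isResolving hS.1
    have := Set.ncard_le_one_iff_subsingleton.mpr (isResolving_iff.mp hS.1).2
    omega

theorem cdim_eq_of_card_eq_two (hk : Nat.card ι = 2) (hs : {i | Subsingleton (W i)}.ncard = 1)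
    (hN : 4 ≤ Nat.card (Σ i, W i)) :
    cdim (completeMultipartiteGraph W) = Nat.card (Σ i, W i) - 1 := by
  have hJ : {i | Subsingleton (W i)}ᶜ.ncard = 1 := by
    have := Set.ncard_add_ncard_compl {i | Subsingleton (W i)}
    omega
  rw [← hJ]
  have hJs : {i | Subsingleton (W i)}ᶜ ∩ {i | Subsingleton (W i)} = ∅ :=
    Set.compl_inter_self _
  refine cdim_eq_card_sub_ncard _ (hJs ▸ Set.subsingleton_empty)
    (by rw [hJs, Set.compl_empty]; exact Set.nontrivial_univ) fun S hS => ?_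
  have hSnt : S.Nontrivial := by
    rw [← Set.one_lt_ncard_iff_nontrivial]
    have := Set.ncard_add_ncard_compl S
    have := ncard_compl_le_of_isResolving hS.1
    omega
  have hmeet := Set.one_lt_ncard_iff_nontrivial.mpr
    (nontrivial_image_fst_of_induce_connected hS.2 hSnt)
  have := Set.ncard_add_ncard_compl (Sigma.fst '' S)
  have := ncard_compl_add_ncard_le_of_isResolving hS.1
  omega

end SimpleGraph.completeMultipartiteGraph

theorem ncard_setOf_subsingleton_fin {k : ℕ} {a : Fin k → ℕ} (ha : ∀ i, 1 ≤ a i) :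
    {i | Subsingleton (Fin (a i))}.ncard = (Finset.univ.filter fun i => a i = 1).card := by
  rw [← Set.ncard_coe_finset]
  congr 1
  ext i
  simp [Fin.subsingleton_iff_le_one, le_antisymm_iff, ha i]

open SimpleGraph.completeMultipartiteGraph

/-- For `k ≥ 2`, let `G = K_{a_1, …, a_k}` be the complete `k`-partite
graph of order `n = a_1 + ⋯ + a_k ≥ 4` (each `a_i ≥ 1`), and let `s` be the number of
partite sets with exactly one element.  Then `cdim(G) = n - 1` if `s = 1` and `k = 2`;
`cdim(G) = n - k` if `s = 0`; and `cdim(G) = n + s - k - 1` otherwise. -/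
theorem stmt_16 (k : ℕ) (hk : 2 ≤ k) (a : Fin k → ℕ) (ha : ∀ i, 1 ≤ a i)
    (hn : 4 ≤ ∑ i, a i) :
    (((Finset.univ.filter fun i => a i = 1).card = 1 ∧ k = 2) →
      cdim (completeMultipartiteGraph fun i => Fin (a i)) = (∑ i, a i) - 1) ∧
    ((Finset.univ.filter fun i => a i = 1).card = 0 →
      cdim (completeMultipartiteGraph fun i => Fin (a i)) = (∑ i, a i) - k) ∧
    ((¬((Finset.univ.filter fun i => a i = 1).card = 1 ∧ k = 2) ∧
        (Finset.univ.filter fun i => a i = 1).card ≠ 0) →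
      cdim (completeMultipartiteGraph fun i => Fin (a i)) =
        (∑ i, a i) + (Finset.univ.filter fun i => a i = 1).card - k - 1) := by
  have : Nontrivial (Fin k) := Fin.nontrivial_iff_two_le.mpr hk
  have : ∀ i, Nonempty (Fin (a i)) := fun i => Fin.pos_iff_nonempty.mp (ha i)
  have hN : Nat.card (Σ i, Fin (a i)) = ∑ i, a i := by simp
  have hs := ncard_setOf_subsingleton_fin ha
  refine ⟨fun ⟨hs1, hk2⟩ => ?_, fun hs0 => ?_, fun ⟨hne, hs0⟩ => ?_⟩
  · rw [← hN]
    exact cdim_eq_of_card_eq_two (by simp [hk2]) (hs ▸ hs1) (hN ▸ hn)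
  · rw [cdim_eq_of_ncard_subsingleton_eq_zero (hs ▸ hs0), hN, Nat.card_fin]
  · have hsk : (Finset.univ.filter fun i => a i = 1).card ≤ k := by
      simpa using Finset.card_filter_le Finset.univ fun i => a i = 1
    have hkN : k ≤ ∑ i, a i := by
      simpa using Finset.sum_le_sum (s := Finset.univ) fun i _ => ha i
    have hk3 : 3 ≤ k := by
      -- for `k = 2` the hypotheses force `s = 2`, i.e. `n = 2`
      by_contra hlt
      have hall : Finset.univ.filter (fun i => a i = 1) = Finset.univ :=
        Finset.eq_univ_of_card _ (by simp only [Fintype.card_fin]; omega)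
      rw [Finset.filter_eq_self] at hall
      simp [hall] at hn
      omega
    rw [cdim_eq_of_three_le (Set.nonempty_of_ncard_ne_zero (hs ▸ hs0)) (by simpa using hk3), hN,
      Nat.card_fin, hs]
    omega
end
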